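/- arXiv:2604.08137 — 11 statements merged into one kernel-verified Lean document; each statement's English description precedes it below -/
import Mathlib

section
/- Let A be an m×n matrix and B an n×m matrix over a field F. Then the minimal polynomial of B·A divides X times the minimal polynomial of A·B, and the minimal polynomial of A·B divides X times the minimal polynomial of B·A (where X denotes the polynomial indeterminate). In particular, the minimal polynomials of AB and BA differ at most by a factor of X. -/
open Matrix Polynomial

/-- The Drazin index of a square matrix: the smallest natural number `k`
such that `rank (A ^ k) = rank (A ^ (k+1))`. -/
noncomputable def drazinIndex {n : Type*} [Fintype n] [DecidableEq n]
    {F : Type*} [Field F] (A : Matrix n n F) : ℕ :=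
  sInf {k : ℕ | (A ^ k).rank = (A ^ (k + 1)).rank}

/-- `X` is the Drazin inverse of `A`:
`A^(k+1) * X = A^k`, `X * A * X = X`, `A * X = X * A` with `k = drazinIndex A`. -/
def IsDrazinInverse {n : Type*} [Fintype n] [DecidableEq n]
    {F : Type*} [Field F] (A X : Matrix n n F) : Prop :=
  A ^ (drazinIndex A + 1) * X = A ^ drazinIndex A ∧ X * A * X = X ∧ A * X = X * A

/-! If `p(AB) = 0` then `(BA) p(BA) = B p(AB) A = 0`, since `B` intertwines `AB` and `BA`. -/

namespace Matrix

variable {m n R : Type*} [Fintype m] [Fintype n] [DecidableEq m] [DecidableEq n]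

section CommSemiring

variable [CommSemiring R] (A : Matrix m n R) (B : Matrix n m R)

theorem mul_pow_mul_comm (k : ℕ) : B * (A * B) ^ k = (B * A) ^ k * B := by
  induction k with
  | zero => simp
  | succ k ih => rw [pow_succ, pow_succ, ← Matrix.mul_assoc, ih, Matrix.mul_assoc,
      Matrix.mul_assoc, Matrix.mul_assoc]

theorem mul_aeval_mul_comm (p : R[X]) : B * aeval (A * B) p = aeval (B * A) p * B := by
  induction p using Polynomial.induction_on' with
  | add p q hp hq => rw [map_add, map_add, Matrix.mul_add, Matrix.add_mul, hp, hq]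
  | monomial k a =>
    simp only [aeval_monomial, ← Algebra.smul_def, Matrix.mul_smul, Matrix.smul_mul,
      mul_pow_mul_comm]

theorem aeval_mul_comm_X_mul (p : R[X]) :
    aeval (B * A) (X * p) = B * aeval (A * B) p * A := by
  rw [mul_comm, map_mul, aeval_X, mul_aeval_mul_comm, Matrix.mul_assoc]

end CommSemiring

theorem minpoly_mul_comm_dvd_X_mul [Field R] (A : Matrix m n R) (B : Matrix n m R) :
    minpoly R (B * A) ∣ X * minpoly R (A * B) :=
  minpoly.dvd _ _ <| by rw [aeval_mul_comm_X_mul, minpoly.aeval, Matrix.mul_zero, Matrix.zero_mul]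

end Matrix

/-- For `A : m × n` and `B : n × m` over a field,
`ψ_{BA} ∣ X · ψ_{AB}` and `ψ_{AB} ∣ X · ψ_{BA}`. -/
theorem minpoly_mul_comm_dvd {F : Type*} [Field F] {m n : ℕ}
    (A : Matrix (Fin m) (Fin n) F) (B : Matrix (Fin n) (Fin m) F) :
    minpoly F (B * A) ∣ Polynomial.X * minpoly F (A * B) ∧
    minpoly F (A * B) ∣ Polynomial.X * minpoly F (B * A) :=
  ⟨minpoly_mul_comm_dvd_X_mul A B, minpoly_mul_comm_dvd_X_mul B A⟩
end

section
/- (Cline's Lemma) Let A be an m×n matrix and B an n×m matrix over a field F. Then (AB)^D = A·((BA)^D)^2·B, and the Drazin indices satisfy |i(AB) − i(BA)| ≤ 1. -/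
open Matrix Polynomial

/-! If `y` is a Drazin inverse of `b * a` with exponent `k`, then
`(b * a) * y ^ 2 = y ^ 2 * (b * a) = y`, and from this `a * y ^ 2 * b` is a Drazin inverse of `a * b`
with exponent `k + 1`; this works in any ring and equally for rectangular matrices. Drazin inverses
are unique whatever exponents they are taken at, which gives the formula. Moreover
`M ^ (p + 1) * X = M ^ p` forces `rank M ^ p = rank M ^ (p + 1)`, hence
`i(AB) ≤ i(BA) + 1`, and symmetrically. -/

/-- `k` is any admissible exponent, not necessarily the Drazin index of `a`. -/
structure IsDrazinInverseAt {M : Type*} [Monoid M] (k : ℕ) (a x : M) : Prop where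
  pow_succ_mul : a ^ (k + 1) * x = a ^ k
  mul_mul_self : x * a * x = x
  commute : Commute a x

namespace IsDrazinInverseAt

variable {M : Type*} [Monoid M] {k j : ℕ} {a x y : M}

theorem of_le (hx : IsDrazinInverseAt k a x) {p : ℕ} (hkp : k ≤ p) :
    IsDrazinInverseAt p a x := by
  refine ⟨?_, hx.mul_mul_self, hx.commute⟩
  obtain ⟨q, rfl⟩ := Nat.exists_eq_add_of_le' hkp
  rw [add_assoc, pow_add, mul_assoc, hx.pow_succ_mul, ← pow_add]

theorem isIdempotentElem_mul (hx : IsDrazinInverseAt k a x) : IsIdempotentElem (a * x) := by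
  rw [IsIdempotentElem, mul_assoc, ← mul_assoc x, hx.mul_mul_self]

theorem mul_sq (hx : IsDrazinInverseAt k a x) : a * (x * x) = x := by
  rw [← mul_assoc, hx.commute.eq, hx.mul_mul_self]

theorem sq_mul (hx : IsDrazinInverseAt k a x) : x * x * a = x := by
  rw [mul_assoc, ← hx.commute.eq, ← mul_assoc, hx.mul_mul_self]

theorem pow_succ_mul_pow (hx : IsDrazinInverseAt k a x) (p : ℕ) :
    x ^ (p + 1) * a ^ p = x := by
  cases p with
  | zero => simp
  | succ p =>
    rw [pow_succ', mul_assoc, ← hx.commute.symm.mul_pow, ← hx.commute.eq,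
      hx.isIdempotentElem_mul.pow_succ_eq, ← mul_assoc, hx.mul_mul_self]

theorem unique_of_same_exponent (hx : IsDrazinInverseAt k a x) (hy : IsDrazinInverseAt k a y) :
    x = y := by
  have hxy : x = x * (a * y) := calc
    x = x ^ (k + 1) * (a ^ (k + 1) * y) := by rw [hy.pow_succ_mul, hx.pow_succ_mul_pow]
    _ = (a * x) ^ (k + 1) * y := by rw [← mul_assoc, ← hx.commute.symm.mul_pow, hx.commute.eq]
    _ = x * (a * y) := by rw [hx.isIdempotentElem_mul.pow_succ_eq, hx.commute.eq, mul_assoc]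
  have hyx : y = x * (a * y) := calc
    y = x * a ^ (k + 1) * y ^ (k + 1) := by
      rw [← (hx.commute.pow_left (k + 1)).eq, hx.pow_succ_mul,
        (hy.commute.pow_pow k (k + 1)).eq, hy.pow_succ_mul_pow]
    _ = x * (a * y) := by
      rw [mul_assoc, ← hy.commute.mul_pow, hy.isIdempotentElem_mul.pow_succ_eq]
  rw [hxy, ← hyx]

theorem unique (hx : IsDrazinInverseAt k a x) (hy : IsDrazinInverseAt j a y) : x = y :=
  (hx.of_le (le_max_left k j)).unique_of_same_exponent (hy.of_le (le_max_right k j))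

end IsDrazinInverseAt

section Cline

variable {R : Type*} [Semiring R] {m n : Type*} [Fintype m] [Fintype n] [DecidableEq m]
  [DecidableEq n]

theorem Matrix.mul_pow_mul (A : Matrix m n R) (B : Matrix n m R) (p : ℕ) :
    (A * B) ^ p * A = A * (B * A) ^ p := by
  induction p with
  | zero => simp
  | succ p ih => calc
      (A * B) ^ (p + 1) * A = (A * B) ^ p * A * (B * A) := by
        simp only [pow_succ, Matrix.mul_assoc]
      _ = A * (B * A) ^ (p + 1) := by rw [ih, pow_succ, Matrix.mul_assoc]

theorem IsDrazinInverseAt.cline {k : ℕ} {A : Matrix m n R} {B : Matrix n m R}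
    {Y : Matrix n n R} (hY : IsDrazinInverseAt k (B * A) Y) :
    IsDrazinInverseAt (k + 1) (A * B) (A * (Y * Y) * B) := by
  refine ⟨?_, ?_, ?_⟩
  · calc (A * B) ^ (k + 1 + 1) * (A * (Y * Y) * B)
        = A * ((B * A) ^ (k + 1 + 1) * Y * Y) * B := by
          rw [← Matrix.mul_assoc, ← Matrix.mul_assoc, Matrix.mul_pow_mul]
          simp only [Matrix.mul_assoc]
      _ = A * (B * A) ^ k * B := by
          rw [(hY.of_le k.le_succ).pow_succ_mul, hY.pow_succ_mul]
      _ = (A * B) ^ (k + 1) := by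
          rw [← Matrix.mul_pow_mul, pow_succ, Matrix.mul_assoc]
  · calc A * (Y * Y) * B * (A * B) * (A * (Y * Y) * B)
        = A * (Y * Y * (B * A) * (B * A * (Y * Y))) * B := by simp only [Matrix.mul_assoc]
      _ = A * (Y * Y) * B := by rw [hY.sq_mul, hY.mul_sq]
  · calc A * B * (A * (Y * Y) * B) = A * (B * A * (Y * Y)) * B := by simp only [Matrix.mul_assoc]
      _ = A * (Y * Y * (B * A)) * B := by rw [hY.mul_sq, hY.sq_mul]
      _ = A * (Y * Y) * B * (A * B) := by simp only [Matrix.mul_assoc]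

end Cline

theorem drazinIndex_le_of_pow_succ_mul {F : Type*} [Field F] {n : Type*} [Fintype n]
    [DecidableEq n] {M X : Matrix n n F} {p : ℕ} (h : M ^ (p + 1) * X = M ^ p) :
    drazinIndex M ≤ p := by
  refine Nat.sInf_le (le_antisymm ?_ ?_)
  · exact h ▸ rank_mul_le_left _ _
  · exact pow_succ M p ▸ rank_mul_le_left _ _

theorem isDrazinInverse_iff {F : Type*} [Field F] {n : Type*} [Fintype n] [DecidableEq n]
    {A X : Matrix n n F} :
    IsDrazinInverse A X ↔ IsDrazinInverseAt (drazinIndex A) A X :=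
  ⟨fun ⟨h₁, h₂, h₃⟩ => ⟨h₁, h₂, h₃⟩, fun ⟨h₁, h₂, h₃⟩ => ⟨h₁, h₂, h₃⟩⟩

/-- Cline's Lemma: `(AB)^D = A ((BA)^D)^2 B` and `|i(AB) - i(BA)| ≤ 1`. -/
theorem cline_lemma {F : Type*} [Field F] {m n : ℕ}
    (A : Matrix (Fin m) (Fin n) F) (B : Matrix (Fin n) (Fin m) F)
    (X : Matrix (Fin m) (Fin m) F) (Y : Matrix (Fin n) (Fin n) F)
    (hX : IsDrazinInverse (A * B) X) (hY : IsDrazinInverse (B * A) Y) :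
    X = A * (Y * Y) * B ∧
    |(drazinIndex (A * B) : ℤ) - (drazinIndex (B * A) : ℤ)| ≤ 1 := by
  rw [isDrazinInverse_iff] at hX hY
  have hAB := hY.cline
  have hBA := hX.cline
  refine ⟨hX.unique hAB, abs_le.mpr ⟨?_, ?_⟩⟩
  · have := drazinIndex_le_of_pow_succ_mul hBA.pow_succ_mul
    omega
  · have := drazinIndex_le_of_pow_succ_mul hAB.pow_succ_mul
    omega
end

section
/- Let W be a singular n×n matrix over a field F with Drazin index i(W) = k ≥ 1, let W⁻ be a von Neumann inverse of W, and let Y be the 2n×2n block matrix Y = [[0, W·W⁻],[W, 0]]. Then i(Y) = 2·i(W) − 1 and Y^D = [[0, W^D·W·W⁻],[W·W^D, 0]]. -/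
open Matrix Polynomial

/-! Let `k = i(W)`. With `P = W * W⁻` we have `P * W = W`, so `Y² = diag(W, W * P)`: the even
powers of `Y` are `diag(W ^ j, (W * P) ^ j)` and `Y ^ (2j+1) = [[0, W ^ j * P], [W ^ (j+1), 0]]`.
A block computation shows that `X = [[0, W^D * W * W⁻], [W * W^D, 0]]` commutes with `Y`,
satisfies `X * Y * X = X` and `Y ^ (2k) * X = Y ^ (2k-1)`. The last identity forces
`rank Y ^ (2k-1) = rank Y ^ (2k)`, while `rank Y ^ (2k)` is smaller than `rank Y ^ (2k-2)` by at
least `rank W ^ (k-1) - rank W ^ k > 0`. Hence `i(Y) = 2k - 1`, and `X = Y^D` by uniqueness of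
the Drazin inverse. -/

theorem pow_succ_mul_pow_eq_of_drazin {M : Type*} [Monoid M] {A X : M}
    (h2 : X * A * X = X) (h3 : A * X = X * A) (i : ℕ) : X ^ (i + 1) * A ^ i = X := by
  have hX : SemiconjBy X (X * A) 1 := by
    rw [SemiconjBy, one_mul, ← h3, ← mul_assoc, h2]
  rw [pow_succ', mul_assoc, ← Commute.mul_pow h3.symm i, (hX.pow_right i).eq, one_pow, one_mul]

theorem eq_of_drazin_equations {M : Type*} [Monoid M] {A X X' : M} {j : ℕ}
    (h1 : A ^ (j + 1) * X = A ^ j) (h2 : X * A * X = X) (h3 : A * X = X * A)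
    (h1' : A ^ (j + 1) * X' = A ^ j) (h2' : X' * A * X' = X') (h3' : A * X' = X' * A) :
    X = X' := by
  have hX' : A ^ j * X' ^ (j + 1) = X' := by
    rw [(Commute.pow_pow h3' j (j + 1)).eq, pow_succ_mul_pow_eq_of_drazin h2' h3']
  have h1X : X * A ^ (j + 1) = A ^ j := by
    rw [← (Commute.pow_left h3 (j + 1)).eq, h1]
  calc X = X ^ (j + 1) * A ^ j := (pow_succ_mul_pow_eq_of_drazin h2 h3 j).symm
    _ = X * A * X' := by
      rw [← h1', ← mul_assoc, pow_succ A, ← mul_assoc, pow_succ_mul_pow_eq_of_drazin h2 h3,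
        mul_assoc]
    _ = X' := by
      conv_lhs => rw [← hX']
      rw [← mul_assoc, mul_assoc X, ← pow_succ', h1X, hX']

section RankPow
variable {K m : Type*} [Field K] [Fintype m] [DecidableEq m]

theorem range_mulVecLin_pow_succ (A : Matrix m m K) (j : ℕ) :
    LinearMap.range (A ^ (j + 1)).mulVecLin =
      (LinearMap.range (A ^ j).mulVecLin).map A.mulVecLin := by
  rw [pow_succ', mulVecLin_mul, LinearMap.range_comp]

theorem rank_pow_succ_le (A : Matrix m m K) (j : ℕ) : (A ^ (j + 1)).rank ≤ (A ^ j).rank := by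
  rw [pow_succ]
  exact rank_mul_le_left _ _

theorem rank_pow_succ_succ_eq (A : Matrix m m K) {j : ℕ} (h : (A ^ j).rank = (A ^ (j + 1)).rank) :
    (A ^ (j + 1)).rank = (A ^ (j + 2)).rank := by
  have hrange : LinearMap.range (A ^ (j + 1)).mulVecLin = LinearMap.range (A ^ j).mulVecLin := by
    refine Submodule.eq_of_le_of_finrank_eq ?_ h.symm
    rw [pow_succ, mulVecLin_mul]
    exact LinearMap.range_comp_le_range _ _
  rw [rank, rank, range_mulVecLin_pow_succ A (j + 1), hrange, ← range_mulVecLin_pow_succ]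
  exact h

theorem rank_pow_eq_rank_pow_succ_of_le (A : Matrix m m K) {j i : ℕ}
    (h : (A ^ j).rank = (A ^ (j + 1)).rank) (hji : j ≤ i) :
    (A ^ i).rank = (A ^ (i + 1)).rank := by
  induction i, hji using Nat.le_induction with
  | base => exact h
  | succ i _ ih => exact rank_pow_succ_succ_eq A ih

theorem exists_rank_pow_eq_rank_pow_succ (A : Matrix m m K) :
    ∃ j, (A ^ j).rank = (A ^ (j + 1)).rank := by
  let r : ℕ → ℕ := fun i ↦ (A ^ i).rank
  exact ⟨Function.argmin r, (Function.argmin_le r _).antisymm (rank_pow_succ_le A _)⟩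

theorem rank_pow_drazinIndex (A : Matrix m m K) :
    (A ^ drazinIndex A).rank = (A ^ (drazinIndex A + 1)).rank :=
  Nat.sInf_mem (exists_rank_pow_eq_rank_pow_succ A)

theorem rank_pow_ne_of_lt_drazinIndex (A : Matrix m m K) {j : ℕ} (h : j < drazinIndex A) :
    (A ^ j).rank ≠ (A ^ (j + 1)).rank :=
  Nat.notMem_of_lt_sInf (s := {k | (A ^ k).rank = (A ^ (k + 1)).rank}) h

theorem drazinIndex_eq_succ (A : Matrix m m K) {j : ℕ}
    (h : (A ^ (j + 1)).rank = (A ^ (j + 2)).rank) (hj : (A ^ j).rank ≠ (A ^ (j + 1)).rank) :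
    drazinIndex A = j + 1 := by
  refine le_antisymm (Nat.sInf_le h) (Nat.succ_le_of_lt (lt_of_not_ge fun hle ↦ hj ?_))
  exact rank_pow_eq_rank_pow_succ_of_le A (rank_pow_drazinIndex A) hle

theorem rank_pow_succ_eq_of_pow_succ_mul_eq {A X : Matrix m m K} {j : ℕ}
    (h : A ^ (j + 1) * X = A ^ j) : (A ^ (j + 1)).rank = (A ^ j).rank :=
  le_antisymm (rank_pow_succ_le A j) (h ▸ rank_mul_le_left _ _)

end RankPow

theorem Submodule.finrank_prod {K V W : Type*} [Field K] [AddCommGroup V] [Module K V]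
    [AddCommGroup W] [Module K W] [FiniteDimensional K V] [FiniteDimensional K W]
    (p : Submodule K V) (q : Submodule K W) :
    Module.finrank K (p.prod q) = Module.finrank K p + Module.finrank K q := by
  have hinj : Function.Injective (p.subtype.prodMap q.subtype) :=
    Function.Injective.prodMap p.injective_subtype q.injective_subtype
  rw [← Module.finrank_prod, ← LinearMap.finrank_range_of_inj hinj, LinearMap.range_prodMap,
    Submodule.range_subtype, Submodule.range_subtype]

theorem rank_fromBlocks_zero₁₂_zero₂₁ {K m o : Type*} [Field K] [Fintype m] [Fintype o]
    [DecidableEq m] [DecidableEq o] (A : Matrix m m K) (D : Matrix o o K) :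
    (fromBlocks A 0 0 D).rank = A.rank + D.rank := by
  let b := (Pi.basisFun K m).prod (Pi.basisFun K o)
  have h : fromBlocks A 0 0 D = LinearMap.toMatrix b b (A.mulVecLin.prodMap D.mulVecLin) := by
    rw [LinearMap.toMatrix_prodMap, LinearMap.toMatrix_eq_toMatrix',
      LinearMap.toMatrix_eq_toMatrix', ← Matrix.toLin'_apply', ← Matrix.toLin'_apply',
      LinearMap.toMatrix'_toLin', LinearMap.toMatrix'_toLin']
  rw [h, rank_eq_finrank_range_toLin _ b b, Matrix.toLin_toMatrix, LinearMap.range_prodMap,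
    Submodule.finrank_prod]
  rfl

theorem IsDrazinInverse.unique {K n : Type*} [Field K] [Fintype n] [DecidableEq n]
    {A X X' : Matrix n n K} (hX : IsDrazinInverse A X) (hX' : IsDrazinInverse A X') : X = X' :=
  eq_of_drazin_equations hX.1 hX.2.1 hX.2.2 hX'.1 hX'.2.1 hX'.2.2

section Blocks
variable {R n : Type*} [Semiring R] [Fintype n] {W Wm WD : Matrix n n R}

theorem mul_mul_vonNeumann_pow_mul [DecidableEq n] (hWm : W * Wm * W = W) (j : ℕ) :
    (W * W * Wm) ^ j * W = W ^ (j + 1) := by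
  have h : SemiconjBy W W (W * W * Wm) := by
    rw [SemiconjBy, mul_assoc W W Wm, mul_assoc W, hWm]
  rw [← (h.pow_right j).eq, pow_succ']

theorem fromBlocks_vonNeumann_pow_two_mul [DecidableEq n] (hWm : W * Wm * W = W) (j : ℕ) :
    fromBlocks 0 (W * Wm) W 0 ^ (2 * j) = fromBlocks (W ^ j) 0 0 ((W * W * Wm) ^ j) := by
  rw [pow_mul, sq, fromBlocks_multiply]
  simp only [Matrix.zero_mul, Matrix.mul_zero, add_zero, zero_add, hWm, ← mul_assoc]
  exact fromBlocks_diagonal_pow _ _ _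

theorem fromBlocks_vonNeumann_pow_two_mul_add_one [DecidableEq n] (hWm : W * Wm * W = W) (j : ℕ) :
    fromBlocks 0 (W * Wm) W 0 ^ (2 * j + 1) =
      fromBlocks 0 (W ^ j * (W * Wm)) (W ^ (j + 1)) 0 := by
  rw [pow_succ, fromBlocks_vonNeumann_pow_two_mul hWm, fromBlocks_multiply]
  simp only [Matrix.zero_mul, Matrix.mul_zero, add_zero, zero_add,
    mul_mul_vonNeumann_pow_mul hWm]

theorem fromBlocks_vonNeumann_pow_mul_fromBlocks [DecidableEq n] (hWm : W * Wm * W = W) {m : ℕ}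
    (hD1 : W ^ (m + 2) * WD = W ^ (m + 1)) (hD3 : W * WD = WD * W) :
    fromBlocks 0 (W * Wm) W 0 ^ (2 * m + 2) * fromBlocks 0 (WD * W * Wm) (W * WD) 0 =
      fromBlocks 0 (W * Wm) W 0 ^ (2 * m + 1) := by
  have hWD : W ^ (m + 1) * WD * W = W ^ (m + 1) := by
    rw [mul_assoc, ← hD3, ← mul_assoc, ← pow_succ, hD1]
  rw [show 2 * m + 2 = 2 * (m + 1) by ring, fromBlocks_vonNeumann_pow_two_mul hWm,
    fromBlocks_vonNeumann_pow_two_mul_add_one hWm, fromBlocks_multiply]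
  simp only [Matrix.zero_mul, Matrix.mul_zero, add_zero, zero_add, ← mul_assoc]
  congr 1
  · rw [hWD, pow_succ]
  · rw [mul_mul_vonNeumann_pow_mul hWm]
    exact hD1

theorem fromBlocks_vonNeumann_commute (hWm : W * Wm * W = W) (hD3 : W * WD = WD * W) :
    fromBlocks 0 (W * Wm) W 0 * fromBlocks 0 (WD * W * Wm) (W * WD) 0 =
      fromBlocks 0 (WD * W * Wm) (W * WD) 0 * fromBlocks 0 (W * Wm) W 0 := by
  simp only [fromBlocks_multiply, Matrix.zero_mul, Matrix.mul_zero, add_zero, zero_add,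
    ← mul_assoc]
  congr 1
  rw [hWm, mul_assoc WD, mul_assoc WD, hWm, hD3]

theorem fromBlocks_vonNeumann_mul_mul (hWm : W * Wm * W = W) (hD2 : WD * W * WD = WD) :
    fromBlocks 0 (WD * W * Wm) (W * WD) 0 * fromBlocks 0 (W * Wm) W 0 *
      fromBlocks 0 (WD * W * Wm) (W * WD) 0 = fromBlocks 0 (WD * W * Wm) (W * WD) 0 := by
  simp only [fromBlocks_multiply, Matrix.zero_mul, Matrix.mul_zero, add_zero, zero_add,
    ← mul_assoc]
  have hWm' : ∀ X : Matrix n n R, X * W * Wm * W = X * W := fun X => by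
    rw [mul_assoc X, mul_assoc X, hWm]
  congr 1
  · rw [hWm', hD2]
  · rw [hWm', mul_assoc W, mul_assoc W, hD2]

end Blocks

section VonNeumannBlock
variable {K n : Type*} [Field K] [Fintype n] [DecidableEq n] {W Wm WD : Matrix n n K}

theorem drazinIndex_fromBlocks_vonNeumann (hWm : W * Wm * W = W) {m : ℕ}
    (hm : drazinIndex W = m + 1) (hWD : IsDrazinInverse W WD) :
    drazinIndex (fromBlocks 0 (W * Wm) W 0) = 2 * m + 1 := by
  obtain ⟨hD1, -, hD3⟩ := hWD
  rw [hm] at hD1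
  have hstab := rank_pow_succ_eq_of_pow_succ_mul_eq
    (fromBlocks_vonNeumann_pow_mul_fromBlocks hWm hD1 hD3)
  refine drazinIndex_eq_succ _ hstab.symm (ne_of_gt ?_)
  rw [← hstab, show 2 * m + 2 = 2 * (m + 1) by ring, fromBlocks_vonNeumann_pow_two_mul hWm,
    fromBlocks_vonNeumann_pow_two_mul hWm, rank_fromBlocks_zero₁₂_zero₂₁,
    rank_fromBlocks_zero₁₂_zero₂₁]
  have hdrop : (W ^ (m + 1)).rank < (W ^ m).rank :=
    (rank_pow_succ_le W m).lt_of_ne (rank_pow_ne_of_lt_drazinIndex W (by omega)).symm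
  exact add_lt_add_of_lt_of_le hdrop (rank_pow_succ_le _ m)

theorem isDrazinInverse_fromBlocks_vonNeumann (hWm : W * Wm * W = W) {m : ℕ}
    (hm : drazinIndex W = m + 1) (hWD : IsDrazinInverse W WD) :
    IsDrazinInverse (fromBlocks 0 (W * Wm) W 0) (fromBlocks 0 (WD * W * Wm) (W * WD) 0) := by
  have hindex := drazinIndex_fromBlocks_vonNeumann hWm hm hWD
  obtain ⟨hD1, hD2, hD3⟩ := hWD
  rw [hm] at hD1
  refine ⟨?_, fromBlocks_vonNeumann_mul_mul hWm hD2, fromBlocks_vonNeumann_commute hWm hD3⟩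
  rw [hindex]
  exact fromBlocks_vonNeumann_pow_mul_fromBlocks hWm hD1 hD3

end VonNeumannBlock

theorem drazin_antidiagonal_block_general {F : Type*} [Field F] {n : ℕ}
    (W Wm : Matrix (Fin n) (Fin n) F)
    (hWm : W * Wm * W = W)
    (hk : 1 ≤ drazinIndex W)
    (WD : Matrix (Fin n) (Fin n) F) (hWD : IsDrazinInverse W WD)
    (YD : Matrix (Fin n ⊕ Fin n) (Fin n ⊕ Fin n) F)
    (hYD : IsDrazinInverse (Matrix.fromBlocks 0 (W * Wm) W 0) YD) :
    drazinIndex (Matrix.fromBlocks 0 (W * Wm) W 0) = 2 * drazinIndex W - 1 ∧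
    YD = Matrix.fromBlocks 0 (WD * W * Wm) (W * WD) 0 := by
  obtain ⟨m, hm⟩ : ∃ m, drazinIndex W = m + 1 := ⟨_, (Nat.sub_add_cancel hk).symm⟩
  refine ⟨?_, hYD.unique (isDrazinInverse_fromBlocks_vonNeumann hWm hm hWD)⟩
  rw [drazinIndex_fromBlocks_vonNeumann hWm hm hWD, hm]
  omega

/-- for `Y = [[0, WW⁻],[W, 0]]` with `W` singular of index `k ≥ 1`,
`i(Y) = 2 i(W) − 1` and `Y^D = [[0, W^D W W⁻],[W W^D, 0]]`. -/
theorem drazin_antidiagonal_block {F : Type*} [Field F] {n : ℕ}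
    (W Wm : Matrix (Fin n) (Fin n) F)
    (hsing : ¬ IsUnit W) (hWm : W * Wm * W = W)
    (hk : 1 ≤ drazinIndex W)
    (WD : Matrix (Fin n) (Fin n) F) (hWD : IsDrazinInverse W WD)
    (YD : Matrix (Fin n ⊕ Fin n) (Fin n ⊕ Fin n) F)
    (hYD : IsDrazinInverse (Matrix.fromBlocks 0 (W * Wm) W 0) YD) :
    drazinIndex (Matrix.fromBlocks 0 (W * Wm) W 0) = 2 * drazinIndex W - 1 ∧
    YD = Matrix.fromBlocks 0 (WD * W * Wm) (W * WD) 0 :=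
  drazin_antidiagonal_block_general W Wm hWm hk WD hWD YD hYD
end

section
/- Let A be an m×n matrix and B an n×m matrix over a field F. Then i(I − AB) = i(I − BA); moreover, the minimal polynomial of I − BA divides (X − 1) times the minimal polynomial of I − AB, and the minimal polynomial of I − AB divides (X − 1) times the minimal polynomial of I − BA. -/
open Matrix Polynomial

/-!
Everything follows from the intertwining relation `B (I - AB) = (I - BA) B`. It makes `B` map
`ker (I - AB)^k` into `ker (I - BA)^k`, injectively because a vector killed by `B` is fixed by
`I - AB`; by symmetry the two kernels have the same dimension, so `rank (I - AB)^k` and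
`rank (I - BA)^k` differ by the constant `m - n` and the Drazin indices agree. Evaluated at
`I - BA`, the polynomial `(X - 1) ψ_{I-AB}` becomes `-B ψ_{I-AB}(I - AB) A = 0`.
-/

namespace Matrix

section Intertwining

variable {R : Type*} [CommRing R] {m n : Type*} [Fintype m] [Fintype n]
  [DecidableEq m] [DecidableEq n]

theorem mul_pow_eq_pow_mul_of_mul_eq {B : Matrix n m R} {M : Matrix m m R} {N : Matrix n n R}
    (h : B * M = N * B) (k : ℕ) : B * M ^ k = N ^ k * B := by
  induction k with
  | zero => simp
  | succ k ih => rw [pow_succ, pow_succ, ← Matrix.mul_assoc, ih, Matrix.mul_assoc, h,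
      Matrix.mul_assoc]

theorem mul_aeval_eq_aeval_mul_of_mul_eq {B : Matrix n m R} {M : Matrix m m R}
    {N : Matrix n n R} (h : B * M = N * B) (p : R[X]) : B * aeval M p = aeval N p * B := by
  induction p using Polynomial.induction_on' with
  | add p q hp hq => rw [map_add, map_add, Matrix.mul_add, Matrix.add_mul, hp, hq]
  | monomial k a => rw [aeval_monomial, aeval_monomial, ← Algebra.smul_def, ← Algebra.smul_def,
      Matrix.mul_smul, Matrix.smul_mul, mul_pow_eq_pow_mul_of_mul_eq h]

theorem mul_one_sub_mul_comm (A : Matrix m n R) (B : Matrix n m R) :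
    B * (1 - A * B) = (1 - B * A) * B := by
  rw [Matrix.mul_sub, Matrix.sub_mul, Matrix.mul_one, Matrix.one_mul, Matrix.mul_assoc]

end Intertwining

theorem rank_add_finrank_ker_mulVecLin {K : Type*} [Field K] {m : Type*} [Fintype m]
    (M : Matrix m m K) :
    M.rank + Module.finrank K (LinearMap.ker M.mulVecLin) = Fintype.card m := by
  rw [Matrix.rank, LinearMap.finrank_range_add_finrank_ker, Module.finrank_fintype_fun_eq_card]

variable {K : Type*} [Field K] {m n : Type*} [Fintype m] [Fintype n]
  [DecidableEq m] [DecidableEq n]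

theorem minpoly_one_sub_mul_comm_dvd (A : Matrix m n K) (B : Matrix n m K) :
    minpoly K (1 - B * A) ∣ (X - 1) * minpoly K (1 - A * B) := by
  apply minpoly.dvd
  rw [map_mul, map_sub, aeval_X, map_one, sub_sub_cancel_left, neg_mul, Matrix.mul_assoc,
    mul_aeval_eq_aeval_mul_of_mul_eq (mul_one_sub_mul_comm B A), minpoly.aeval,
    Matrix.zero_mul, Matrix.mul_zero, neg_zero]

theorem finrank_ker_one_sub_mul_pow_le (A : Matrix m n K) (B : Matrix n m K) (k : ℕ) :
    Module.finrank K (LinearMap.ker ((1 - A * B) ^ k).mulVecLin) ≤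
      Module.finrank K (LinearMap.ker ((1 - B * A) ^ k).mulVecLin) := by
  have hmaps : ∀ v ∈ LinearMap.ker ((1 - A * B) ^ k).mulVecLin,
      B.mulVecLin v ∈ LinearMap.ker ((1 - B * A) ^ k).mulVecLin := by
    intro v hv
    simp only [LinearMap.mem_ker, mulVecLin_apply] at hv ⊢
    rw [mulVec_mulVec, ← mul_pow_eq_pow_mul_of_mul_eq (mul_one_sub_mul_comm A B),
      ← mulVec_mulVec, hv, mulVec_zero]
  refine LinearMap.finrank_le_finrank_of_injective (f := B.mulVecLin.restrict hmaps) ?_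
  rw [LinearMap.injective_restrict_iff, LinearMap.disjoint_ker]
  intro v hv hBv
  rw [mulVecLin_apply] at hBv
  have hfix (j : ℕ) : (1 - A * B) ^ j *ᵥ v = v := by
    induction j with
    | zero => simp
    | succ j ih => rw [pow_succ, ← mulVec_mulVec, sub_mulVec, one_mulVec, ← mulVec_mulVec, hBv,
        mulVec_zero, sub_zero, ih]
  rwa [LinearMap.mem_ker, mulVecLin_apply, hfix] at hv

theorem rank_one_sub_mul_pow_add_card (A : Matrix m n K) (B : Matrix n m K) (k : ℕ) :
    ((1 - A * B) ^ k).rank + Fintype.card n = ((1 - B * A) ^ k).rank + Fintype.card m := by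
  have hker := (finrank_ker_one_sub_mul_pow_le A B k).antisymm
    (finrank_ker_one_sub_mul_pow_le B A k)
  have hAB := rank_add_finrank_ker_mulVecLin ((1 - A * B) ^ k)
  have hBA := rank_add_finrank_ker_mulVecLin ((1 - B * A) ^ k)
  omega

end Matrix

theorem drazinIndex_eq_of_rank_pow_add_eq {K : Type*} [Field K] {m n : Type*}
    [Fintype m] [Fintype n] [DecidableEq m] [DecidableEq n]
    {M : Matrix m m K} {N : Matrix n n K} (c d : ℕ)
    (h : ∀ k, (M ^ k).rank + c = (N ^ k).rank + d) : drazinIndex M = drazinIndex N := by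
  unfold drazinIndex
  congr 1
  ext k
  have := h k
  have := h (k + 1)
  simp only [Set.mem_ofPred_eq]
  omega

/-- `i(I − AB) = i(I − BA)`, and the minimal polynomials of `I − AB`
and `I − BA` divide each other up to a factor `X − 1`. -/
theorem jacobson_index_minpoly {F : Type*} [Field F] {m n : ℕ}
    (A : Matrix (Fin m) (Fin n) F) (B : Matrix (Fin n) (Fin m) F) :
    drazinIndex (1 - A * B) = drazinIndex (1 - B * A) ∧
    minpoly F (1 - B * A) ∣ (Polynomial.X - 1) * minpoly F (1 - A * B) ∧
    minpoly F (1 - A * B) ∣ (Polynomial.X - 1) * minpoly F (1 - B * A) :=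
  ⟨drazinIndex_eq_of_rank_pow_add_eq _ _ (rank_one_sub_mul_pow_add_card A B),
    minpoly_one_sub_mul_comm_dvd A B, minpoly_one_sub_mul_comm_dvd B A⟩
end

section
/- Let A be a square singular matrix over a field F. Then there exists a von Neumann inverse A⁻ of A such that i(A) = i(A²A⁻ + I − AA⁻) + 1. -/
open Matrix Polynomial

/-!
With `P = A A⁻` (an idempotent with `P A = A`) and `B = A² A⁻ + I − A A⁻`, one has `B A = A²` and
`B (I − P) = I − P`, hence `B ^ k = A ^ (k + 1) A⁻ + (I − P)`. The column space of `B ^ k` is thus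
the direct sum of those of `A ^ (k + 1)` (fixed by `P`) and of `I − P` (killed by `P`), so
`rank (B ^ k) = rank (A ^ (k + 1)) + rank (I − P)`: up to a constant, the rank sequence of `B` is
that of `A` shifted by one. As `A` is singular, `i(A) ≥ 1`, and therefore `i(A) = i(B) + 1`.
-/

theorem LinearMap.exists_comp_comp_eq_self {K V W : Type*} [DivisionRing K] [AddCommGroup V]
    [Module K V] [AddCommGroup W] [Module K W] (f : V →ₗ[K] W) :
    ∃ g : W →ₗ[K] V, f ∘ₗ g ∘ₗ f = f := by
  obtain ⟨s, hs⟩ := (range f).subtype.exists_leftInverse_of_injective (range f).ker_subtype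
  obtain ⟨r, hr⟩ := f.rangeRestrict.exists_rightInverse_of_surjective f.range_rangeRestrict
  refine ⟨r ∘ₗ s, ?_⟩
  calc f ∘ₗ (r ∘ₗ s) ∘ₗ f
      = (range f).subtype ∘ₗ (f.rangeRestrict ∘ₗ r) ∘ₗ (s ∘ₗ (range f).subtype) ∘ₗ
          f.rangeRestrict := rfl
    _ = f := by rw [hs, hr]; rfl

namespace Matrix

open LinearMap (range)

variable {l m n o K : Type*} [Fintype m] [Fintype n] [Fintype o] [Field K]

theorem exists_mul_mul_eq_self [DecidableEq m] [DecidableEq n] (A : Matrix m n K) :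
    ∃ G : Matrix n m K, A * G * A = A := by
  obtain ⟨g, hg⟩ := (toLin' A).exists_comp_comp_eq_self
  refine ⟨LinearMap.toMatrix' g, toLin'.injective ?_⟩
  rwa [toLin'_mul, toLin'_mul, toLin'_toMatrix']

theorem range_mulVecLin_mul_le (A : Matrix l m K) (B : Matrix m n K) :
    range (A * B).mulVecLin ≤ range A.mulVecLin := by
  rw [mulVecLin_mul]
  exact LinearMap.range_comp_le_range _ _

theorem range_mulVecLin_eq_sup {X : Matrix l n K} {Y : Matrix l m K} {Z : Matrix l o K}
    {U : Matrix m n K} {V : Matrix o n K} {U' : Matrix n m K} {V' : Matrix n o K}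
    (hX : X = Y * U + Z * V) (hY : X * U' = Y) (hZ : X * V' = Z) :
    range X.mulVecLin = range Y.mulVecLin ⊔ range Z.mulVecLin := by
  refine le_antisymm ?_ (sup_le ?_ ?_)
  · rintro _ ⟨x, rfl⟩
    rw [hX, mulVecLin_apply, add_mulVec, ← mulVec_mulVec, ← mulVec_mulVec]
    exact Submodule.add_mem_sup (LinearMap.mem_range_self _ _) (LinearMap.mem_range_self _ _)
  · exact hY ▸ range_mulVecLin_mul_le X U'
  · exact hZ ▸ range_mulVecLin_mul_le X V'

theorem disjoint_range_mulVecLin [Fintype l] {P : Matrix l l K} {Y : Matrix l m K}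
    {Z : Matrix l n K} (hY : P * Y = Y) (hZ : P * Z = 0) :
    Disjoint (range Y.mulVecLin) (range Z.mulVecLin) := by
  rw [Submodule.disjoint_def]
  rintro _ ⟨y, rfl⟩ ⟨z, hz⟩
  rw [mulVecLin_apply] at hz ⊢
  calc Y *ᵥ y = P *ᵥ (Z *ᵥ z) := by rw [hz, mulVecLin_apply, mulVec_mulVec, hY]
    _ = 0 := by rw [mulVec_mulVec, hZ, zero_mulVec]

theorem rank_eq_add_of_range_eq_sup {X : Matrix l n K} {Y : Matrix l m K} {Z : Matrix l o K}
    (hsup : range X.mulVecLin = range Y.mulVecLin ⊔ range Z.mulVecLin)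
    (hdisj : Disjoint (range Y.mulVecLin) (range Z.mulVecLin)) :
    X.rank = Y.rank + Z.rank := by
  have := Submodule.finrank_sup_add_finrank_inf_eq (range Y.mulVecLin) (range Z.mulVecLin)
  rw [hdisj.eq_bot, finrank_bot, add_zero, ← hsup] at this
  exact this

theorem isUnit_of_rank_eq_card [DecidableEq n] {A : Matrix n n K} (hA : A.rank = Fintype.card n) :
    IsUnit A := by
  have htop : range A.mulVecLin = ⊤ :=
    Submodule.eq_top_of_finrank_eq (by rw [← rank, hA, Module.finrank_fintype_fun_eq_card])
  exact mulVec_surjective_iff_isUnit.1 (LinearMap.range_eq_top.1 htop)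

theorem exists_rank_pow_eq_rank_pow_succ [DecidableEq n] (A : Matrix n n K) :
    ∃ k, (A ^ k).rank = (A ^ (k + 1)).rank := by
  let r : ℕ → ℕ := fun k ↦ (A ^ k).rank
  refine ⟨Function.argmin r, le_antisymm (Function.argmin_le r _) ?_⟩
  rw [pow_succ]
  exact rank_mul_le_left _ _

theorem rank_pow_mul_mul_add_one_sub_mul [DecidableEq n] {A G : Matrix n n K}
    (hG : A * G * A = A) (k : ℕ) :
    ((A * A * G + 1 - A * G) ^ k).rank = (A ^ (k + 1)).rank + (1 - A * G).rank := by
  have hBA : (A * A * G + 1 - A * G) * A = A * A :=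
    calc _ = A * (A * G * A) + (A - A * G * A) := by noncomm_ring
      _ = A * A := by rw [hG, sub_self, add_zero]
  have hBP : (A * A * G + 1 - A * G) * (1 - A * G) = 1 - A * G :=
    calc _ = A * (A * G - A * G * A * G) + (1 - A * G) - (A * G - A * G * A * G) := by
          noncomm_ring
      _ = 1 - A * G := by rw [hG, sub_self, mul_zero, zero_add, sub_zero]
  have hPP : A * G * (1 - A * G) = 0 := by rw [mul_sub, mul_one, ← mul_assoc, hG, sub_self]
  set P := A * G
  set B := A * A * G + 1 - P
  have hBkA : ∀ j : ℕ, B ^ j * A = A ^ (j + 1) := by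
    intro j
    induction j with
    | zero => simp
    | succ j ih => rw [pow_succ, mul_assoc, hBA, ← mul_assoc, ih, ← pow_succ]
  have hBkP : ∀ j : ℕ, B ^ j * (1 - P) = 1 - P := by
    intro j
    induction j with
    | zero => simp
    | succ j ih => rw [pow_succ, mul_assoc, hBP, ih]
  have hBk : B ^ k = A ^ (k + 1) * G + (1 - P) * 1 := by
    calc B ^ k = B ^ k * (P + (1 - P)) := by rw [add_sub_cancel, mul_one]
      _ = A ^ (k + 1) * G + (1 - P) * 1 := by rw [mul_add, ← mul_assoc, hBkA, hBkP, mul_one]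
  have hPAk : P * A ^ (k + 1) = A ^ (k + 1) := by rw [pow_succ', ← mul_assoc, hG]
  exact rank_eq_add_of_range_eq_sup (range_mulVecLin_eq_sup hBk (hBkA k) (hBkP k))
    (disjoint_range_mulVecLin hPAk hPP)

end Matrix

theorem drazinIndex_eq_add_one_of_rank_pow_eq {n K : Type*} [Fintype n] [DecidableEq n] [Field K]
    {A B : Matrix n n K} (hA : ¬IsUnit A) (c : ℕ)
    (hB : ∀ k, (B ^ k).rank = (A ^ (k + 1)).rank + c) :
    drazinIndex A = drazinIndex B + 1 := by
  have hzero : 0 ∉ {k | (A ^ k).rank = (A ^ (k + 1)).rank} := fun h0 ↦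
    hA (isUnit_of_rank_eq_card (by simpa using h0.symm))
  have hpos : 1 ≤ drazinIndex A := Nat.one_le_iff_ne_zero.2 fun h ↦
    (Nat.sInf_eq_zero.1 h).elim hzero
      (Set.nonempty_iff_ne_empty.1 A.exists_rank_pow_eq_rank_pow_succ)
  rw [drazinIndex, drazinIndex, ← Nat.sInf_add hpos]
  simp only [hB, add_left_inj]

/-- for a singular square matrix `A` there is a von Neumann inverse `A⁻`
with `i(A) = i(A²A⁻ + I − AA⁻) + 1`. -/
theorem exists_vonNeumann_index {F : Type*} [Field F] {n : ℕ}
    (A : Matrix (Fin n) (Fin n) F) (hsing : ¬ IsUnit A) :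
    ∃ Am : Matrix (Fin n) (Fin n) F, A * Am * A = A ∧
      drazinIndex A = drazinIndex (A * A * Am + 1 - A * Am) + 1 := by
  obtain ⟨Am, hAm⟩ := A.exists_mul_mul_eq_self
  exact ⟨Am, hAm, drazinIndex_eq_add_one_of_rank_pow_eq hsing _
    (rank_pow_mul_mul_add_one_sub_mul hAm)⟩
end

section
/- Let A be a square matrix over a field F, and let A⁻ and A⁼ be any two von Neumann inverses of A. Then i(A²A⁻ + I − AA⁻) = i(A²A⁼ + I − AA⁼); that is, the Drazin index of A²A⁻ + I − AA⁻ does not depend on the choice of von Neumann inverse A⁻. -/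
/-!
Put `P = A * A⁻`, an idempotent with `P * A = A` and range `P` = range `A`. The powers of
`B = A²A⁻ + I − P` are `B ^ k = A ^ (k + 1) * A⁻ + (I − P)`, and `B ^ k * A = A ^ (k + 1)`,
`B ^ k * (I − P) = I − P`. So the range of `B ^ k` is the direct sum of the range of
`A ^ (k + 1)` (inside range `P`) and of `ker P`, whence
`rank (B ^ k) = rank (A ^ (k + 1)) + n − rank A`. As consecutive powers of `A`, once of equal
rank, stay of equal rank, this gives `i(B) = i(A) − 1` (truncated), whatever `A⁻` is.
-/

open Matrix Polynomial

section Ring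

variable {R : Type*} [Ring R] {a x : R}

theorem pow_mul_add_one_sub_mul_self (h : a * x * a = a) (k : ℕ) :
    (a ^ (k + 1) * x + 1 - a * x) * a = a ^ (k + 1) := by
  have hk : a ^ (k + 1) * x * a = a ^ (k + 1) := by
    rw [pow_succ, mul_assoc (a ^ k), mul_assoc (a ^ k), h]
  rw [sub_mul, add_mul, hk, h, one_mul, add_sub_cancel_right]

theorem pow_mul_add_one_sub_mul_one_sub (h : a * x * a = a) (k : ℕ) :
    (a ^ (k + 1) * x + 1 - a * x) * (1 - a * x) = 1 - a * x := by
  have hb := pow_mul_add_one_sub_mul_self h k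
  calc (a ^ (k + 1) * x + 1 - a * x) * (1 - a * x)
      = (a ^ (k + 1) * x + 1 - a * x) - (a ^ (k + 1) * x + 1 - a * x) * a * x := by noncomm_ring
    _ = 1 - a * x := by rw [hb]; abel

theorem mul_mul_add_one_sub_pow (h : a * x * a = a) (k : ℕ) :
    (a * a * x + 1 - a * x) ^ k = a ^ (k + 1) * x + 1 - a * x := by
  induction k with
  | zero => simp
  | succ k ih =>
    calc (a * a * x + 1 - a * x) ^ (k + 1)
        = (a ^ (k + 1) * x + 1 - a * x) * a * (a * x)
          + (a ^ (k + 1) * x + 1 - a * x) * (1 - a * x) := by rw [pow_succ, ih]; noncomm_ring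
      _ = a ^ (k + 2) * x + 1 - a * x := by
        rw [pow_mul_add_one_sub_mul_self h, pow_mul_add_one_sub_mul_one_sub h, pow_succ a (k + 1)]
        noncomm_ring

end Ring

open LinearMap Module in
theorem Module.End.finrank_range_mul_mul_add_one_sub_pow {K V : Type*} [Field K]
    [AddCommGroup V] [Module K V] [FiniteDimensional K V]
    {f g : Module.End K V} (h : f * g * f = f) (k : ℕ) :
    finrank K (range ((f * f * g + 1 - f * g) ^ k)) + finrank K (range f)
      = finrank K (range (f ^ (k + 1))) + finrank K V := by
  have hp : IsIdempotentElem (f * g) := by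
    show f * g * (f * g) = f * g
    rw [← mul_assoc, h]
  have hrange_p : range (f * g) = range f := by
    refine le_antisymm (range_comp_le_range g f) ?_
    calc range f = range (f * g * f) := by rw [h]
      _ ≤ range (f * g) := range_comp_le_range _ _
  have hdisj : Disjoint (range (f ^ (k + 1))) (ker (f * g)) := by
    refine hp.isCompl.disjoint.mono_left ?_
    rw [hrange_p, pow_succ']
    exact range_comp_le_range _ _
  have hsup : range ((f * f * g + 1 - f * g) ^ k) = range (f ^ (k + 1)) ⊔ ker (f * g) := by
    rw [mul_mul_add_one_sub_pow h, hp.ker_eq_range_one_sub]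
    refine le_antisymm ?_ (sup_le ?_ ?_)
    · rw [add_sub_assoc]
      exact (range_add_le _ _).trans (sup_le_sup_right (range_comp_le_range _ _) _)
    · conv_lhs => rw [← pow_mul_add_one_sub_mul_self h k]
      exact range_comp_le_range _ _
    · conv_lhs => rw [← pow_mul_add_one_sub_mul_one_sub h k]
      exact range_comp_le_range _ _
  have hdim := Submodule.finrank_sup_add_finrank_inf_eq (range (f ^ (k + 1))) (ker (f * g))
  rw [disjoint_iff.mp hdisj, finrank_bot, ← hsup] at hdim
  have hrank_nullity := finrank_range_add_finrank_ker (f * g)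
  rw [hrange_p] at hrank_nullity
  omega

theorem LinearMap.range_pow_succ_succ_eq {R M : Type*} [Semiring R] [AddCommMonoid M]
    [Module R M] {f : Module.End R M} {k : ℕ} (h : range (f ^ (k + 1)) = range (f ^ k)) :
    range (f ^ (k + 2)) = range (f ^ (k + 1)) := by
  calc range (f ^ (k + 2)) = (range (f ^ (k + 1))).map f := by
        rw [pow_succ' f (k + 1), Module.End.mul_eq_comp, range_comp]
    _ = (range (f ^ k)).map f := by rw [h]
    _ = range (f ^ (k + 1)) := by rw [pow_succ', Module.End.mul_eq_comp, range_comp]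

theorem Nat.sInf_succ_eq_sInf_sub_one {p : ℕ → Prop} (hp : ∀ k, p k → p (k + 1)) :
    sInf {k | p (k + 1)} = sInf {k | p k} - 1 := by
  rcases Nat.eq_zero_or_pos (sInf {k | p k}) with h | h
  · rw [h, Nat.sInf_eq_zero]
    rcases Nat.sInf_eq_zero.mp h with h₀ | hempty
    · exact Or.inl (hp 0 h₀)
    · exact Or.inr (Set.eq_empty_of_forall_notMem fun k hk => hempty.subset hk)
  · have := Nat.sInf_add (p := p) (n := 1) h
    omega

namespace Matrix

variable {m K : Type*} [Fintype m] [DecidableEq m] [Field K] {A X : Matrix m m K}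

theorem rank_eq_finrank_range_toLinAlgEquiv' (M : Matrix m m K) :
    M.rank = Module.finrank K (LinearMap.range (toLinAlgEquiv' M)) := rfl

theorem rank_mul_mul_add_one_sub_pow (h : A * X * A = A) (k : ℕ) :
    ((A * A * X + 1 - A * X) ^ k).rank + A.rank = (A ^ (k + 1)).rank + Fintype.card m := by
  have h' : toLinAlgEquiv' A * toLinAlgEquiv' X * toLinAlgEquiv' A = toLinAlgEquiv' A := by
    rw [← map_mul, ← map_mul, h]
  simp only [rank_eq_finrank_range_toLinAlgEquiv']
  rw [map_pow, map_pow, map_sub, map_add, map_mul, map_mul, map_mul, map_one,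
    ← Module.finrank_fintype_fun_eq_card K]
  exact Module.End.finrank_range_mul_mul_add_one_sub_pow h' k

theorem rank_pow_succ_succ_eq {k : ℕ} (h : (A ^ k).rank = (A ^ (k + 1)).rank) :
    (A ^ (k + 1)).rank = (A ^ (k + 2)).rank := by
  simp only [rank_eq_finrank_range_toLinAlgEquiv'] at h ⊢
  rw [map_pow, map_pow] at h ⊢
  have hle : LinearMap.range (toLinAlgEquiv' A ^ (k + 1))
      ≤ LinearMap.range (toLinAlgEquiv' A ^ k) := by
    rw [pow_succ, Module.End.mul_eq_comp]
    exact LinearMap.range_comp_le_range _ _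
  rw [LinearMap.range_pow_succ_succ_eq (Submodule.eq_of_le_of_finrank_eq hle h.symm)]

theorem drazinIndex_mul_mul_add_one_sub (h : A * X * A = A) :
    drazinIndex (A * A * X + 1 - A * X) = drazinIndex A - 1 := by
  have hrank (k : ℕ) :
      ((A * A * X + 1 - A * X) ^ k).rank = ((A * A * X + 1 - A * X) ^ (k + 1)).rank ↔
        (A ^ (k + 1)).rank = (A ^ (k + 1 + 1)).rank := by
    have := rank_mul_mul_add_one_sub_pow h k
    have := rank_mul_mul_add_one_sub_pow h (k + 1)
    omega
  unfold drazinIndex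
  simp only [hrank]
  exact Nat.sInf_succ_eq_sInf_sub_one (p := fun k => (A ^ k).rank = (A ^ (k + 1)).rank)
    fun _ => rank_pow_succ_succ_eq

end Matrix

/-- the Drazin index of `A²A⁻ + I − AA⁻` does not depend on the choice
of von Neumann inverse `A⁻`. -/
theorem index_invariant_vonNeumann {F : Type*} [Field F] {n : ℕ}
    (A Am Ae : Matrix (Fin n) (Fin n) F)
    (hAm : A * Am * A = A) (hAe : A * Ae * A = A) :
    drazinIndex (A * A * Am + 1 - A * Am) = drazinIndex (A * A * Ae + 1 - A * Ae) := by
  rw [Matrix.drazinIndex_mul_mul_add_one_sub hAm, Matrix.drazinIndex_mul_mul_add_one_sub hAe]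
end

section
/- Let A be a square singular matrix over a field F and A⁻ any von Neumann inverse of A. Then A^D = ((A²A⁻ + I − AA⁻)^D)² · A. -/
open Matrix Polynomial

/-- Unlike in `IsDrazinInverse`, the exponent `k` need not be the index of `a`. -/
def IsDrazinInverseWith {R : Type*} [Ring R] (k : ℕ) (a x : R) : Prop :=
  a ^ (k + 1) * x = a ^ k ∧ x * a * x = x ∧ a * x = x * a

theorem IsIdempotentElem.add_mul_add {R : Type*} [Ring R] {q u v : R} (hq : IsIdempotentElem q)
    (hu : u * q = 0) (hv : q * v = 0) : (u + q) * (v + q) = u * v + q := by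
  rw [add_mul, mul_add, mul_add, hu, hv, hq.eq, zero_add, add_zero]

namespace IsDrazinInverseWith

variable {R : Type*} [Ring R] {k l : ℕ} {a x y p q : R}

theorem mono (h : IsDrazinInverseWith k a x) (hkl : k ≤ l) : IsDrazinInverseWith l a x := by
  obtain ⟨j, rfl⟩ := Nat.exists_eq_add_of_le hkl
  refine ⟨?_, h.2⟩
  calc a ^ (k + j + 1) * x = a ^ j * (a ^ (k + 1) * x) := by
        rw [← mul_assoc, ← pow_add]; ring_nf
    _ = a ^ (k + j) := by rw [h.1, ← pow_add, add_comm]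

theorem commute (h : IsDrazinInverseWith k a x) : Commute a x := h.2.2

theorem mul_mul_self (h : IsDrazinInverseWith k a x) : x * (x * a) = x := by
  rw [← h.commute.eq, ← mul_assoc, h.2.1]

theorem pow_succ_mul_pow (h : IsDrazinInverseWith k a x) (m : ℕ) : x ^ (m + 1) * a ^ m = x := by
  rw [pow_succ', mul_assoc, ← h.commute.symm.mul_pow]
  induction m with
  | zero => simp
  | succ m ih => rw [pow_succ', ← mul_assoc, h.mul_mul_self, ih]

theorem pow_mul_pow_succ (h : IsDrazinInverseWith k a x) (m : ℕ) : a ^ m * x ^ (m + 1) = x := by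
  rw [(h.commute.pow_pow m (m + 1)).eq, h.pow_succ_mul_pow]

/-- Both `x` and `y` equal `x * a * y`. -/
theorem unique (hx : IsDrazinInverseWith k a x) (hy : IsDrazinInverseWith l a y) : x = y := by
  wlog hkl : k ≤ l generalizing k l x y
  · exact (this hy hx (by omega)).symm
  replace hx := hx.mono hkl
  have hxa : x * a ^ (l + 1) = a ^ l := by rw [← (hx.commute.pow_left _).eq, hx.1]
  calc x = x ^ (l + 1) * a ^ l := (hx.pow_succ_mul_pow l).symm
    _ = x ^ (l + 1) * (a ^ (l + 1) * y) := by rw [hy.1]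
    _ = x ^ (l + 1) * a ^ l * (a * y) := by rw [pow_succ a l]; simp only [mul_assoc]
    _ = x * a * (a ^ l * y ^ (l + 1)) := by rw [hx.pow_succ_mul_pow, hy.pow_mul_pow_succ, mul_assoc]
    _ = x * a ^ (l + 1) * y ^ (l + 1) := by rw [pow_succ' a l]; simp only [mul_assoc]
    _ = y := by rw [hxa, hy.pow_mul_pow_succ]

theorem eq_mul_mul_self (h : IsDrazinInverseWith k a x) : x = a * (x * x) := by
  rw [← mul_assoc, h.commute.eq, h.2.1]

theorem mul_eq_self_of_left (h : IsDrazinInverseWith k a x) (hpa : p * a = a) : p * x = x := by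
  rw [h.eq_mul_mul_self, ← mul_assoc, hpa]

theorem mul_eq_zero_of_left (h : IsDrazinInverseWith k a x) (hqa : q * a = 0) : q * x = 0 := by
  rw [h.eq_mul_mul_self, ← mul_assoc, hqa, zero_mul]

theorem mul_eq_zero_of_right (h : IsDrazinInverseWith k a x) (haq : a * q = 0) : x * q = 0 := by
  rw [← h.mul_mul_self, mul_assoc, mul_assoc, haq, mul_zero, mul_zero]

theorem mul_right_of_mul_eq_self (h : IsDrazinInverseWith k a x) (hpa : p * a = a) :
    IsDrazinInverseWith (k + 1) (a * p) (x * p) := by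
  have hpa' (z : R) : p * (a * z) = a * z := by rw [← mul_assoc, hpa]
  have hpx' (z : R) : p * (x * z) = x * z := by rw [← mul_assoc, h.mul_eq_self_of_left hpa]
  have hpow (m : ℕ) : (a * p) ^ (m + 1) = a ^ (m + 1) * p := by
    induction m with
    | zero => simp
    | succ m ih => rw [pow_succ, ih, pow_succ a (m + 1)]; simp only [mul_assoc, hpa']
  refine ⟨?_, ?_, ?_⟩
  · rw [hpow, hpow]
    simp only [mul_assoc, hpx']
    rw [← mul_assoc, (h.mono k.le_succ).1]
  · simp only [mul_assoc, hpx', hpa']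
    rw [← mul_assoc, ← mul_assoc, h.2.1]
  · simp only [mul_assoc, hpx', hpa']
    rw [← mul_assoc, ← mul_assoc, h.commute.eq]

theorem add_idempotent (h : IsDrazinInverseWith (k + 1) a x) (hq : IsIdempotentElem q)
    (hqa : q * a = 0) (haq : a * q = 0) : IsDrazinInverseWith (k + 1) (a + q) (x + q) := by
  have hqx := h.mul_eq_zero_of_left hqa
  have hxq := h.mul_eq_zero_of_right haq
  have hpowq (m : ℕ) : a ^ (m + 1) * q = 0 := by rw [pow_succ, mul_assoc, haq, mul_zero]
  have hpow (m : ℕ) : (a + q) ^ (m + 1) = a ^ (m + 1) + q := by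
    induction m with
    | zero => simp
    | succ m ih => rw [pow_succ, ih, hq.add_mul_add (hpowq m) hqa, ← pow_succ]
  refine ⟨?_, ?_, ?_⟩
  · rw [hpow, hpow, hq.add_mul_add (hpowq _) hqx, h.1]
  · rw [hq.add_mul_add hxq hqa, hq.add_mul_add (by rw [mul_assoc, haq, mul_zero]) hqx, h.2.1]
  · rw [hq.add_mul_add haq hqx, hq.add_mul_add hxq hqa, h.commute.eq]

theorem mul_add_one_sub (h : IsDrazinInverseWith k a x) (hp : IsIdempotentElem p)
    (hpa : p * a = a) : IsDrazinInverseWith (k + 1) (a * p + (1 - p)) (x * p + (1 - p)) := by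
  refine (h.mul_right_of_mul_eq_self hpa).add_idempotent hp.one_sub ?_ ?_
  · rw [sub_mul, one_mul, ← mul_assoc, hpa, sub_self]
  · rw [mul_sub, mul_one, mul_assoc, hp.eq, sub_self]

end IsDrazinInverseWith

theorem IsDrazinInverse.isDrazinInverseWith {n F : Type*} [Fintype n] [DecidableEq n] [Field F]
    {A X : Matrix n n F} (h : IsDrazinInverse A X) : IsDrazinInverseWith (drazinIndex A) A X :=
  h

theorem drazin_from_special_sum_general {F : Type*} [Field F] {n : ℕ}
    (A Am : Matrix (Fin n) (Fin n) F)
    (hAm : A * Am * A = A)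
    (AD D : Matrix (Fin n) (Fin n) F)
    (hAD : IsDrazinInverse A AD)
    (hD : IsDrazinInverse (A * A * Am + 1 - A * Am) D) :
    AD = D ^ 2 * A := by
  set P := A * Am
  have hP : IsIdempotentElem P := by rw [IsIdempotentElem, ← mul_assoc, hAm]
  have hAD := hAD.isDrazinInverseWith
  have hB : A * A * Am + 1 - A * Am = A * P + (1 - P) := by rw [mul_assoc A A, add_sub_assoc]
  rw [hB] at hD
  have hDeq : D = AD * P + (1 - P) := hD.isDrazinInverseWith.unique (hAD.mul_add_one_sub hP hAm)
  have hDmul (z : Matrix (Fin n) (Fin n) F) (hz : P * z = z) : D * z = AD * z := by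
    rw [hDeq, add_mul, sub_mul, one_mul, mul_assoc, hz, sub_self, add_zero]
  rw [sq, mul_assoc, hDmul A hAm, hDmul _ (by rw [← mul_assoc, hAD.mul_eq_self_of_left hAm]),
    hAD.mul_mul_self]

/-- for a singular `A` and any von Neumann inverse `A⁻`,
`A^D = ((A²A⁻ + I − AA⁻)^D)² · A`. -/
theorem drazin_from_special_sum {F : Type*} [Field F] {n : ℕ}
    (A Am : Matrix (Fin n) (Fin n) F)
    (hsing : ¬ IsUnit A) (hAm : A * Am * A = A)
    (AD D : Matrix (Fin n) (Fin n) F)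
    (hAD : IsDrazinInverse A AD)
    (hD : IsDrazinInverse (A * A * Am + 1 - A * Am) D) :
    AD = D ^ 2 * A :=
  drazin_from_special_sum_general A Am hAm AD D hAD hD
end

section
/- Let A be a square singular matrix over a field F, so that its minimal polynomial factors as ψ_A = X · q for a polynomial q. Then for every von Neumann inverse A⁻ of A, the minimal polynomial of A²A⁻ + I − AA⁻ equals lcm(q, X − 1). -/
open Matrix Polynomial

/-- Key computation: if `E * B = A * E` and `(1 - E) * B = 1 - E`, then for every
polynomial `p` we have `p(B) = p(A) * E + p(1) • (1 - E)` provided `B = A*E + 1 - E`. -/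
lemma aeval_special {F : Type*} [Field F] {n : ℕ}
    (A E B : Matrix (Fin n) (Fin n) F)
    (hB : B = A * E + 1 - E)
    (hEB : E * B = A * E) (h1EB : (1 - E) * B = 1 - E) (p : Polynomial F) :
    Polynomial.aeval B p = Polynomial.aeval A p * E + (p.eval 1) • (1 - E) := by
  induction p using Polynomial.induction_on with
  | C a =>
      simp only [aeval_C, eval_C, Algebra.algebraMap_eq_smul_one, smul_mul_assoc,
        one_mul, smul_sub]
      abel
  | add p r hp hr =>
      rw [map_add, map_add, eval_add, hp, hr, add_mul, add_smul]
      abel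
  | monomial m a ih =>
      have hx : (Polynomial.C a : Polynomial F) * Polynomial.X ^ (m + 1)
          = (Polynomial.C a * Polynomial.X ^ m) * Polynomial.X := by ring
      have step1 : Polynomial.aeval B (Polynomial.C a * Polynomial.X ^ m * Polynomial.X)
          = Polynomial.aeval B (Polynomial.C a * Polynomial.X ^ m) * B := by
        rw [_root_.map_mul, aeval_X]
      rw [hx, step1, ih, add_mul, mul_assoc, hEB, smul_mul_assoc, h1EB]
      conv_rhs => rw [_root_.map_mul, aeval_X, eval_mul, eval_X, mul_one]
      rw [mul_assoc]

/-- if `A` is singular with `ψ_A = X · q`, then for every von Neumann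
inverse `A⁻`, `ψ_{A²A⁻ + I − AA⁻} = lcm(q, X − 1)`. -/
theorem minpoly_special_sum {F : Type*} [Field F] [DecidableEq F] {n : ℕ}
    (A : Matrix (Fin n) (Fin n) F) (hsing : ¬ IsUnit A)
    (q : Polynomial F) (hq : minpoly F A = Polynomial.X * q) :
    ∀ Am : Matrix (Fin n) (Fin n) F, A * Am * A = A →
      minpoly F (A * A * Am + 1 - A * Am) = lcm q (Polynomial.X - 1) := by
  intro Am hAm
  set E : Matrix (Fin n) (Fin n) F := A * Am with hEdef
  set B : Matrix (Fin n) (Fin n) F := A * A * Am + 1 - A * Am with hBdef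
  have hB : B = A * E + 1 - E := by rw [hBdef, hEdef, mul_assoc]
  have hE2 : E * E = E := by
    rw [hEdef]; rw [← mul_assoc, hAm]
  have hEA : E * A = A := by rw [hEdef, hAm]
  have hEB : E * B = A * E := by
    rw [hB, mul_sub, mul_add, mul_one, ← mul_assoc, hEA, hE2]
    abel
  have hBE : B * E = A * E := by
    rw [hB, sub_mul, add_mul, one_mul, mul_assoc, hE2]
    abel
  have h1EB : (1 - E) * B = 1 - E := by
    rw [sub_mul, one_mul, hEB, hB]
    abel
  -- integrality
  have hintA : IsIntegral F A := Matrix.isIntegral A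
  have hintB : IsIntegral F B := Matrix.isIntegral B
  have hq0 : q ≠ 0 := by
    intro h
    exact minpoly.ne_zero hintA (by rw [hq, h, mul_zero])
  have hX1 : (Polynomial.X - 1 : Polynomial F) ≠ 0 := by
    have := Polynomial.X_sub_C_ne_zero (1 : F)
    simpa using this
  have hL0 : lcm q (Polynomial.X - 1) ≠ 0 := fun h => (lcm_eq_zero_iff _ _).mp h |>.elim hq0 hX1
  -- 1 - E ≠ 0
  have h1E : (1 : Matrix (Fin n) (Fin n) F) - E ≠ 0 := by
    intro h
    apply hsing
    have hE1 : E = 1 := by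
      have := sub_eq_zero.mp h
      exact this.symm
    have : A.det * Am.det = 1 := by
      rw [← Matrix.det_mul, ← hEdef, hE1, Matrix.det_one]
    exact (Matrix.isUnit_iff_isUnit_det A).mpr (IsUnit.of_mul_eq_one _ this)
  -- q(A) * E = 0
  have hqAE : Polynomial.aeval A q * E = 0 := by
    have h1 : Polynomial.aeval A (q * Polynomial.X) = 0 := by
      rw [mul_comm, ← hq, minpoly.aeval]
    rw [hEdef, ← mul_assoc]
    rw [_root_.map_mul, aeval_X] at h1
    rw [h1, zero_mul]
  -- direction 1 : minpoly B ∣ lcm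
  have key := aeval_special A E B hB hEB h1EB
  have hLB : Polynomial.aeval B (lcm q (Polynomial.X - 1)) = 0 := by
    obtain ⟨s, hs⟩ := dvd_lcm_left q (Polynomial.X - 1)
    obtain ⟨t, ht⟩ := dvd_lcm_right q (Polynomial.X - 1)
    rw [key]
    have h1 : (lcm q (Polynomial.X - 1)).eval 1 = 0 := by
      rw [ht, eval_mul, eval_sub, eval_X, eval_one, sub_self, zero_mul]
    have h2 : Polynomial.aeval A (lcm q (Polynomial.X - 1)) * E = 0 := by
      rw [hs, mul_comm q s, _root_.map_mul, mul_assoc, hqAE, mul_zero]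
    rw [h1, h2, zero_smul, add_zero]
  have hmL : minpoly F B ∣ lcm q (Polynomial.X - 1) := minpoly.dvd F B hLB
  -- direction 2 : lcm ∣ minpoly B
  have hm0 : Polynomial.aeval A (minpoly F B) * E
      + ((minpoly F B).eval 1) • (1 - E) = 0 := by
    rw [← key, minpoly.aeval]
  have hE1E : E * (1 - E) = 0 := by rw [mul_sub, mul_one, hE2, sub_self]
  have h1EE : (1 - E) * E = 0 := by rw [sub_mul, one_mul, hE2, sub_self]
  have h1E1E : (1 - E) * (1 - E) = 1 - E := by
    rw [sub_mul, one_mul, mul_sub, mul_one, hE2]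
    abel
  have hmAE : Polynomial.aeval A (minpoly F B) * E = 0 := by
    have := congrArg (· * E) hm0
    simpa [add_mul, mul_assoc, hE2, smul_mul_assoc, h1EE] using this
  have hm1 : (minpoly F B).eval 1 = 0 := by
    have h := congrArg (· * (1 - E)) hm0
    simp only [add_mul, mul_assoc, hE1E, mul_zero, smul_mul_assoc, h1E1E,
      zero_add, zero_mul] at h
    rcases smul_eq_zero.mp h with h' | h'
    · exact h'
    · exact absurd h' h1E
  have hXm : (Polynomial.X - 1 : Polynomial F) ∣ minpoly F B := by
    have : (Polynomial.X - Polynomial.C (1 : F)) ∣ minpoly F B :=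
      (Polynomial.dvd_iff_isRoot).mpr hm1
    simpa using this
  have hqm : q ∣ minpoly F B := by
    have hmA : Polynomial.aeval A (minpoly F B) * A = 0 := by
      have := congrArg (· * A) hmAE
      simpa [mul_assoc, hEA] using this
    have hdvd : minpoly F A ∣ minpoly F B * Polynomial.X := by
      apply minpoly.dvd
      rw [_root_.map_mul, aeval_X, hmA]
    rw [hq, mul_comm (minpoly F B) Polynomial.X] at hdvd
    exact (mul_dvd_mul_iff_left (Polynomial.X_ne_zero)).mp hdvd
  have hLm : lcm q (Polynomial.X - 1) ∣ minpoly F B := lcm_dvd hqm hXm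
  -- both monic, hence equal
  have hmMonic : (minpoly F B).Monic := minpoly.monic hintB
  have hLMonic : (lcm q (Polynomial.X - 1)).Monic := by
    have := Polynomial.monic_normalize hL0
    rwa [normalize_lcm] at this
  exact Polynomial.eq_of_monic_of_associated hmMonic hLMonic
    (associated_of_dvd_dvd hmL hLm)
end

section
/- Let A be an n×n matrix, B an n×m matrix, C an m×n matrix over a field F, with both A and B·C singular, and suppose A·B·C = 0. Let M = [[A, B],[C, 0]]. Then max{i(A), 2·i(BC) − 1} − 1 ≤ i(M) ≤ i(A) + 2·i(BC) + 2. -/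
open Matrix Polynomial

namespace DrazinAux

open Module Submodule

variable {F : Type*} [Field F]

/-- The column space of a matrix. -/
noncomputable def rng {ι κ : Type*} [Fintype κ] (X : Matrix ι κ F) :
    Submodule F (ι → F) :=
  LinearMap.range X.mulVecLin

set_option linter.unusedSectionVars false

variable {ι κ κ' : Type*} [Fintype ι] [DecidableEq ι] [Fintype κ] [Fintype κ']

theorem rank_eq_rng (X : Matrix ι κ F) : X.rank = Module.finrank F (rng X) := rfl

theorem mem_rng {X : Matrix ι κ F} {v : ι → F} :
    v ∈ rng X ↔ ∃ u, X *ᵥ u = v := by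
  simp [rng, LinearMap.mem_range, Matrix.mulVecLin_apply]

theorem rng_mul (X : Matrix ι κ F) (Y : Matrix κ κ' F) :
    rng (X * Y) = (rng Y).map X.mulVecLin := by
  rw [rng, Matrix.mulVecLin_mul, LinearMap.range_comp]; rfl

theorem rng_mul_le (X : Matrix ι κ F) (Y : Matrix κ κ' F) :
    rng (X * Y) ≤ rng X := by
  rw [rng_mul]
  exact LinearMap.map_le_range

variable (X : Matrix ι ι F)

theorem rank_pow_antitone {k l : ℕ} (h : k ≤ l) : (X ^ l).rank ≤ (X ^ k).rank := by
  have : X ^ l = X ^ k * X ^ (l - k) := by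
    rw [← pow_add]; congr 1; omega
  rw [this]
  exact Matrix.rank_mul_le_left _ _

theorem rng_pow_le {d l : ℕ} (h : d ≤ l) :
    rng (X ^ l) ≤ rng (X ^ d) := by
  have hX : X ^ l = X ^ d * X ^ (l - d) := by rw [← pow_add]; congr 1; omega
  rw [hX]
  exact rng_mul_le _ _

theorem exists_rank_pow_stab : ∃ k, (X ^ k).rank = (X ^ (k + 1)).rank := by
  by_contra h
  push_neg at h
  have hlt : ∀ k, (X ^ (k + 1)).rank < (X ^ k).rank := fun k =>
    lt_of_le_of_ne (rank_pow_antitone X (Nat.le_succ k)) (fun he => h k he.symm)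
  have key : ∀ k, (X ^ k).rank + k ≤ (X ^ 0).rank := by
    intro k
    induction k with
    | zero => simp
    | succ k ih =>
      have := hlt k
      omega
  have := key ((X ^ 0).rank + 1)
  omega

theorem rng_pow_succ_eq {k : ℕ} (h : (X ^ k).rank = (X ^ (k + 1)).rank) :
    rng (X ^ (k + 1)) = rng (X ^ k) := by
  refine Submodule.eq_of_le_of_finrank_le ?_ ?_
  · rw [pow_succ]
    exact rng_mul_le _ _
  · rw [← rank_eq_rng, ← rank_eq_rng, h]

theorem stab_succ {k : ℕ} (h : (X ^ k).rank = (X ^ (k + 1)).rank) :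
    (X ^ (k + 1)).rank = (X ^ (k + 2)).rank := by
  have h2 : X ^ (k + 2) = X * X ^ (k + 1) := by rw [← pow_succ']
  have h1 : X ^ (k + 1) = X * X ^ k := by rw [← pow_succ']
  have key : rng (X ^ (k + 2)) = rng (X ^ (k + 1)) := by
    rw [h2, rng_mul, rng_pow_succ_eq X h, ← rng_mul, ← h1]
    exact rng_pow_succ_eq X h
  rw [rank_eq_rng, rank_eq_rng, key]

theorem drazin_mem : (X ^ drazinIndex X).rank = (X ^ (drazinIndex X + 1)).rank :=
  Nat.sInf_mem (exists_rank_pow_stab X)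

theorem stab_of_drazin_le {k : ℕ} (h : drazinIndex X ≤ k) :
    (X ^ k).rank = (X ^ (k + 1)).rank := by
  induction k, h using Nat.le_induction with
  | base => exact drazin_mem X
  | succ k _ ih => exact stab_succ X ih

theorem drazin_le_iff {k : ℕ} :
    drazinIndex X ≤ k ↔ (X ^ k).rank = (X ^ (k + 1)).rank :=
  ⟨stab_of_drazin_le X, fun h => Nat.sInf_le h⟩

theorem rng_pow_eq_of_drazin_le {k l : ℕ} (hk : drazinIndex X ≤ k) (hkl : k ≤ l) :
    rng (X ^ l) = rng (X ^ k) := by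
  induction l, hkl using Nat.le_induction with
  | base => rfl
  | succ l hl ih =>
    rw [rng_pow_succ_eq X (stab_of_drazin_le X (le_trans hk hl)), ih]

theorem rank_pow_eq_of_drazin_le {k l : ℕ} (hk : drazinIndex X ≤ k) (hkl : k ≤ l) :
    (X ^ l).rank = (X ^ k).rank := by
  rw [rank_eq_rng, rank_eq_rng, rng_pow_eq_of_drazin_le X hk hkl]


theorem ker_pow_le {k l : ℕ} (h : k ≤ l) :
    LinearMap.ker (X ^ k).mulVecLin ≤ LinearMap.ker (X ^ l).mulVecLin := by
  intro v hv
  have hl : X ^ l = X ^ (l - k) * X ^ k := by rw [← pow_add]; congr 1; omega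
  simp only [LinearMap.mem_ker, Matrix.mulVecLin_apply] at hv ⊢
  rw [hl, ← Matrix.mulVec_mulVec, hv, Matrix.mulVec_zero]

theorem ker_pow_eq_of_drazin_le {k l : ℕ} (hk : drazinIndex X ≤ k) (hkl : k ≤ l) :
    LinearMap.ker (X ^ l).mulVecLin = LinearMap.ker (X ^ k).mulVecLin := by
  refine (Submodule.eq_of_le_of_finrank_le (ker_pow_le X hkl) ?_).symm
  have h1 := LinearMap.finrank_range_add_finrank_ker (X ^ k).mulVecLin
  have h2 := LinearMap.finrank_range_add_finrank_ker (X ^ l).mulVecLin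
  have h3 : (X ^ l).rank = (X ^ k).rank := rank_pow_eq_of_drazin_le X hk hkl
  rw [rank_eq_rng, rank_eq_rng] at h3
  unfold rng at h3
  omega

theorem drazin_le_of_inj {k : ℕ}
    (h : ∀ v ∈ rng (X ^ k), X *ᵥ v = 0 → v = 0) : drazinIndex X ≤ k := by
  rw [drazin_le_iff]
  set f := X.mulVecLin with hf
  set p := rng (X ^ k) with hp
  have hmap : p.map f = rng (X ^ (k + 1)) := by
    rw [hp, ← rng_mul, ← pow_succ']
  have hker : LinearMap.ker (f.domRestrict p) = ⊥ := by
    rw [LinearMap.ker_domRestrict, Submodule.eq_bot_iff]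
    rintro ⟨v, hv⟩ hv0
    simp only [Submodule.mem_comap, Submodule.coe_subtype, LinearMap.mem_ker] at hv0
    have : v = 0 := h v hv hv0
    simpa [Submodule.mk_eq_zero] using this
  have hrn := LinearMap.finrank_range_add_finrank_ker (f.domRestrict p)
  rw [LinearMap.range_domRestrict, hker, hmap] at hrn
  simp only [finrank_bot, add_zero] at hrn
  rw [rank_eq_rng, rank_eq_rng]
  exact hrn.symm

theorem inj_of_rank_stab {k : ℕ} (h : (X ^ k).rank = (X ^ (k + 1)).rank) :
    ∀ v ∈ rng (X ^ k), X *ᵥ v = 0 → v = 0 := by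
  have hmap : (rng (X ^ k)).map X.mulVecLin = rng (X ^ (k + 1)) := by
    rw [← rng_mul, ← pow_succ']
  have hrn := LinearMap.finrank_range_add_finrank_ker (X.mulVecLin.domRestrict (rng (X ^ k)))
  rw [LinearMap.range_domRestrict, hmap] at hrn
  rw [rank_eq_rng, rank_eq_rng] at h
  have hker0 : finrank F (LinearMap.ker (X.mulVecLin.domRestrict (rng (X ^ k)))) = 0 := by
    omega
  have hker : LinearMap.ker (X.mulVecLin.domRestrict (rng (X ^ k))) = ⊥ :=
    Submodule.finrank_eq_zero.mp hker0
  intro v hv hv0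
  have : (⟨v, hv⟩ : rng (X ^ k)) ∈ LinearMap.ker (X.mulVecLin.domRestrict (rng (X ^ k))) := by
    simp only [LinearMap.ker_domRestrict, Submodule.mem_comap, Submodule.coe_subtype,
      LinearMap.mem_ker]
    exact hv0
  rw [hker, Submodule.mem_bot] at this
  simpa [Submodule.mk_eq_zero] using this

theorem drazin_transpose : drazinIndex Xᵀ = drazinIndex X := by
  unfold drazinIndex
  congr 1
  ext k
  simp only [Set.mem_setOf_eq, ← Matrix.transpose_pow, Matrix.rank_transpose]

theorem one_le_drazin_of_not_isUnit (h : ¬ IsUnit X) : 1 ≤ drazinIndex X := by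
  rw [Nat.one_le_iff_ne_zero]
  intro hd
  have h0 := drazin_mem X
  rw [hd] at h0
  simp only [pow_zero, pow_one, Matrix.rank_one, zero_add] at h0
  -- rank X = card ι  ⇒  X invertible
  have hker : LinearMap.ker X.mulVecLin = ⊥ := by
    have hrn := LinearMap.finrank_range_add_finrank_ker X.mulVecLin
    have hpi : finrank F (ι → F) = Fintype.card ι := by
      simp [Module.finrank_pi]
    have hr : X.rank = finrank F (LinearMap.range X.mulVecLin) := rfl
    have : finrank F (LinearMap.ker X.mulVecLin) = 0 := by omega
    exact Submodule.finrank_eq_zero.mp this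
  have hdet : X.det ≠ 0 := by
    intro hdet
    obtain ⟨v, hv, hv0⟩ := Matrix.exists_mulVec_eq_zero_iff.mpr hdet
    have : v ∈ LinearMap.ker X.mulVecLin := by
      simpa [LinearMap.mem_ker, Matrix.mulVecLin_apply] using hv0
    rw [hker, Submodule.mem_bot] at this
    exact hv this
  exact h (X.isUnit_iff_isUnit_det.mpr (isUnit_iff_ne_zero.mpr hdet))

section UV

variable {σ τ : Type*} [Fintype σ] [DecidableEq σ] [Fintype τ] [DecidableEq τ]

theorem pow_UV (U : Matrix σ τ F) (V : Matrix τ σ F) (k : ℕ) :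
    (U * V) ^ (k + 1) = U * ((V * U) ^ k * V) := by
  induction k with
  | zero => simp
  | succ k ih =>
    calc (U * V) ^ (k + 2) = (U * V) ^ (k + 1) * (U * V) := by rw [pow_succ]
    _ = U * ((V * U) ^ k * V) * (U * V) := by rw [ih]
    _ = U * ((V * U) ^ (k + 1) * V) := by
        rw [pow_succ]
        simp only [Matrix.mul_assoc]

theorem drazin_UV_le (U : Matrix σ τ F) (V : Matrix τ σ F) :
    drazinIndex (U * V) ≤ drazinIndex (V * U) + 1 := by
  set s := drazinIndex (V * U) with hs
  rw [drazin_le_iff]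
  have key : ∀ k, s + 1 ≤ k → ((U * V) ^ k).rank = ((V * U) ^ s).rank := by
    intro k hk
    refine le_antisymm ?_ ?_
    · obtain ⟨k', rfl⟩ : ∃ k', k = k' + 1 := ⟨k - 1, by omega⟩
      rw [pow_UV]
      calc (U * ((V * U) ^ k' * V)).rank ≤ ((V * U) ^ k' * V).rank :=
            Matrix.rank_mul_le_right _ _
      _ ≤ ((V * U) ^ k').rank := Matrix.rank_mul_le_left _ _
      _ = ((V * U) ^ s).rank := rank_pow_eq_of_drazin_le _ le_rfl (by omega)
    · have hVU : (V * U) ^ (k + 1) = V * ((U * V) ^ k * U) := pow_UV V U k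
      calc ((V * U) ^ s).rank = ((V * U) ^ (k + 1)).rank :=
            (rank_pow_eq_of_drazin_le _ le_rfl (by omega)).symm
      _ = (V * ((U * V) ^ k * U)).rank := by rw [hVU]
      _ ≤ ((U * V) ^ k * U).rank := Matrix.rank_mul_le_right _ _
      _ ≤ ((U * V) ^ k).rank := Matrix.rank_mul_le_left _ _
  rw [key (s + 1) le_rfl, key (s + 2) (by omega)]

end UV

section RankBlocks

variable {κ₂ : Type*} [Fintype κ₂] [DecidableEq κ₂]

theorem rank_fromBlocks_zero (Y : Matrix ι ι F) :
    (Matrix.fromBlocks Y 0 0 (0 : Matrix κ₂ κ₂ F)).rank = Y.rank := by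
  refine le_antisymm ?_ ?_
  · have h1 : Matrix.fromBlocks Y 0 0 (0 : Matrix κ₂ κ₂ F) =
        Matrix.fromRows ((1 : Matrix ι ι F) * Y) ((0 : Matrix κ₂ ι F) * Y) *
          Matrix.fromCols (1 : Matrix ι ι F) (0 : Matrix ι κ₂ F) := by
      rw [Matrix.fromRows_mul_fromCols]
      simp
    rw [h1, ← Matrix.fromRows_mul]
    calc (Matrix.fromRows (1 : Matrix ι ι F) (0 : Matrix κ₂ ι F) * Y *
            Matrix.fromCols (1 : Matrix ι ι F) (0 : Matrix ι κ₂ F)).rank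
        ≤ (Matrix.fromRows (1 : Matrix ι ι F) (0 : Matrix κ₂ ι F) * Y).rank :=
          Matrix.rank_mul_le_left _ _
      _ ≤ Y.rank := Matrix.rank_mul_le_right _ _
  · have h2 : Y = Matrix.fromCols (1 : Matrix ι ι F) (0 : Matrix ι κ₂ F) *
        Matrix.fromBlocks Y 0 0 (0 : Matrix κ₂ κ₂ F) *
        Matrix.fromRows (1 : Matrix ι ι F) (0 : Matrix κ₂ ι F) := by
      rw [Matrix.fromCols_mul_fromBlocks]
      simp [Matrix.fromCols_mul_fromRows]
    conv_lhs => rw [h2]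
    calc (Matrix.fromCols (1 : Matrix ι ι F) (0 : Matrix ι κ₂ F) *
        Matrix.fromBlocks Y 0 0 (0 : Matrix κ₂ κ₂ F) *
        Matrix.fromRows (1 : Matrix ι ι F) (0 : Matrix κ₂ ι F)).rank
      _ ≤ (Matrix.fromCols (1 : Matrix ι ι F) (0 : Matrix ι κ₂ F) *
            Matrix.fromBlocks Y 0 0 (0 : Matrix κ₂ κ₂ F)).rank := Matrix.rank_mul_le_left _ _
      _ ≤ (Matrix.fromBlocks Y 0 0 (0 : Matrix κ₂ κ₂ F)).rank := Matrix.rank_mul_le_right _ _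

end RankBlocks


section Words

variable {n m : ℕ}

/-- `Pm A E (k+1)` is `P_k = ∑ E^j A^(k-2j)`, with `Pm A E 0 = 0`. -/
def Pm (A E : Matrix (Fin n) (Fin n) F) : ℕ → Matrix (Fin n) (Fin n) F
  | 0 => 0
  | 1 => 1
  | (k + 2) => A * Pm A E (k + 1) + E * Pm A E k

/-- `Qm E k` : the top-right block of `N^(k-1)`. -/
def Qm (E : Matrix (Fin n) (Fin n) F) (k : ℕ) : Matrix (Fin n) (Fin n) F :=
  if k % 2 = 0 ∧ k ≠ 0 then E ^ (k / 2) else 0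

variable {A E : Matrix (Fin n) (Fin n) F} (hAE : A * E = 0)

theorem Pm_zero : Pm A E 0 = 0 := rfl
theorem Pm_one : Pm A E 1 = 1 := rfl
theorem Pm_succ_succ (k : ℕ) :
    Pm A E (k + 2) = A * Pm A E (k + 1) + E * Pm A E k := rfl
theorem Pm_two : Pm A E 2 = A := by
  rw [show (2:ℕ) = 0 + 2 from rfl, Pm_succ_succ, Pm_one, Pm_zero, mul_one, mul_zero, add_zero]

theorem Qm_zero : Qm E 0 = 0 := by simp [Qm]
theorem Qm_one : Qm E 1 = 0 := by simp [Qm]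
theorem Qm_two : Qm E 2 = E := by norm_num [Qm]
theorem Qm_odd (t : ℕ) : Qm E (2 * t + 1) = 0 := by
  have : (2 * t + 1) % 2 = 1 := by omega
  simp [Qm, this]
theorem Qm_even (t : ℕ) : Qm E (2 * t + 2) = E ^ (t + 1) := by
  have h2 : (2 * t + 2) % 2 = 0 := by omega
  have h3 : (2 * t + 2) / 2 = t + 1 := by omega
  simp [Qm, h2, h3]

include hAE

theorem Apow_mul_E (k : ℕ) : A ^ (k + 1) * E = 0 := by
  rw [pow_succ, Matrix.mul_assoc, hAE, Matrix.mul_zero]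

theorem A_mul_Epow (s : ℕ) : A * E ^ (s + 1) = 0 := by
  rw [pow_succ', ← Matrix.mul_assoc, hAE, Matrix.zero_mul]

theorem A_mul_Pm : ∀ k, A * Pm A E (k + 1) = A ^ (k + 1)
  | 0 => by rw [Pm_one, mul_one, pow_one]
  | (k + 1) => by
    have ih : A * Pm A E (k + 1) = A ^ (k + 1) := A_mul_Pm k
    rw [Pm_succ_succ, Matrix.mul_add, ← Matrix.mul_assoc A E, hAE, Matrix.zero_mul, add_zero,
      ih, ← pow_succ']

theorem Apow_mul_Pm (i k : ℕ) : A ^ (i + 1) * Pm A E (k + 1) = A ^ (i + k + 1) := by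
  induction i with
  | zero => rw [pow_one, A_mul_Pm hAE, zero_add]
  | succ i ih =>
    rw [pow_succ', Matrix.mul_assoc, ih, ← pow_succ']
    congr 1
    omega

theorem A_mul_Qm (k : ℕ) : A * Qm E k = 0 := by
  unfold Qm
  split
  · rename_i hcond
    obtain ⟨s, hs⟩ : ∃ s, k / 2 = s + 1 := ⟨k / 2 - 1, by omega⟩
    rw [hs]
    exact A_mul_Epow hAE s
  · rw [Matrix.mul_zero]

omit hAE

theorem E_mul_Qm (j : ℕ) : E * Qm E (j + 1) = Qm E (j + 3) := by
  obtain ⟨t, rfl | rfl⟩ := Nat.even_or_odd' j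
  · rw [Qm_odd t, Matrix.mul_zero]
    have h : 2 * t + 3 = 2 * (t + 1) + 1 := by ring
    rw [h, Qm_odd]
  · have h1 : 2 * t + 1 + 1 = 2 * t + 2 := by ring
    rw [h1, Qm_even t]
    have h : 2 * t + 1 + 3 = 2 * (t + 1) + 2 := by ring
    rw [h, Qm_even, ← pow_succ']

include hAE

theorem Pm_mul_E : ∀ t : ℕ, Pm A E (2 * t) * E = 0 ∧ Pm A E (2 * t + 1) * E = E ^ (t + 1)
  | 0 => by
    constructor
    · rw [Nat.mul_zero, Pm_zero, Matrix.zero_mul]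
    · rw [Nat.mul_zero, Nat.zero_add, Pm_one, Matrix.one_mul, pow_one]
  | (t + 1) => by
    obtain ⟨ih1, ih2⟩ := Pm_mul_E t
    constructor
    · have h1 : 2 * (t + 1) = 2 * t + 2 := by ring
      rw [h1, Pm_succ_succ, Matrix.add_mul]
      have e1 : A * Pm A E (2 * t + 1) * E = 0 := by
        rw [A_mul_Pm hAE, Apow_mul_E hAE]
      have e2 : E * Pm A E (2 * t) * E = 0 := by
        rw [Matrix.mul_assoc, ih1, Matrix.mul_zero]
      rw [e1, e2, add_zero]
    · have h2 : 2 * (t + 1) + 1 = (2 * t + 1) + 2 := by ring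
      rw [h2, Pm_succ_succ, Matrix.add_mul]
      have e1 : A * Pm A E (2 * t + 1 + 1) * E = 0 := by
        rw [A_mul_Pm hAE, Apow_mul_E hAE]
      have e2 : E * Pm A E (2 * t + 1) * E = E ^ (t + 1 + 1) := by
        rw [Matrix.mul_assoc, ih2, ← pow_succ']
      rw [e1, e2, zero_add]

theorem Pm_add_two (k : ℕ) : Pm A E (k + 2) = A ^ (k + 1) + E * Pm A E k := by
  rw [Pm_succ_succ, A_mul_Pm hAE]

/-- Powers of `N = [[A, E], [1, 0]]`. -/
theorem N_pow : ∀ k : ℕ,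
    (Matrix.fromBlocks A E (1 : Matrix (Fin n) (Fin n) F) 0) ^ (k + 1) =
      Matrix.fromBlocks (Pm A E (k + 2)) (Qm E (k + 2)) (Pm A E (k + 1)) (Qm E (k + 1))
  | 0 => by
    rw [pow_one, Pm_two, Qm_two, Pm_one, Qm_one]
  | (k + 1) => by
    have hQ : E * Qm E (k + 1) = Qm E (k + 3) := E_mul_Qm k
    have hP : Pm A E (k + 3) = A * Pm A E (k + 2) + E * Pm A E (k + 1) := Pm_succ_succ (k + 1)
    rw [pow_succ', N_pow k, Matrix.fromBlocks_multiply]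
    show Matrix.fromBlocks (A * Pm A E (k + 2) + E * Pm A E (k + 1))
        (A * Qm E (k + 2) + E * Qm E (k + 1))
        (1 * Pm A E (k + 2) + 0 * Pm A E (k + 1))
        (1 * Qm E (k + 2) + 0 * Qm E (k + 1)) =
      Matrix.fromBlocks (Pm A E (k + 3)) (Qm E (k + 3)) (Pm A E (k + 2)) (Qm E (k + 2))
    rw [hP, ← hQ, A_mul_Qm hAE, zero_add, Matrix.one_mul, Matrix.one_mul, Matrix.zero_mul,
      Matrix.zero_mul, add_zero, add_zero]

/-- Powers of `M = [[A, B], [C, 0]]`, where `E = B * C`. -/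
theorem M_pow {B : Matrix (Fin n) (Fin m) F} {C : Matrix (Fin m) (Fin n) F}
    (hE : E = B * C) : ∀ k : ℕ,
    (Matrix.fromBlocks A B C (0 : Matrix (Fin m) (Fin m) F)) ^ (k + 1) =
      Matrix.fromBlocks (Pm A E (k + 2)) (Pm A E (k + 1) * B)
        (C * Pm A E (k + 1)) (C * Pm A E k * B)
  | 0 => by
    rw [pow_one, Pm_two, Pm_one, Pm_zero, Matrix.one_mul, Matrix.mul_one, Matrix.mul_zero,
      Matrix.zero_mul]
  | (k + 1) => by
    have hP : Pm A E (k + 3) = A * Pm A E (k + 2) + E * Pm A E (k + 1) := Pm_succ_succ (k + 1)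
    have hP2 : Pm A E (k + 2) = A * Pm A E (k + 1) + E * Pm A E k := Pm_succ_succ k
    rw [pow_succ', M_pow hE k, Matrix.fromBlocks_multiply]
    show Matrix.fromBlocks
        (A * Pm A E (k + 2) + B * (C * Pm A E (k + 1)))
        (A * (Pm A E (k + 1) * B) + B * (C * Pm A E k * B))
        (C * Pm A E (k + 2) + 0 * (C * Pm A E (k + 1)))
        (C * (Pm A E (k + 1) * B) + 0 * (C * Pm A E k * B)) =
      Matrix.fromBlocks (Pm A E (k + 3)) (Pm A E (k + 2) * B)
        (C * Pm A E (k + 2)) (C * Pm A E (k + 1) * B)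
    have e1 : A * Pm A E (k + 2) + B * (C * Pm A E (k + 1)) = Pm A E (k + 3) := by
      rw [hP, ← Matrix.mul_assoc, hE]
    have e2 : A * (Pm A E (k + 1) * B) + B * (C * Pm A E k * B) = Pm A E (k + 2) * B := by
      rw [hP2, Matrix.add_mul, ← Matrix.mul_assoc, ← Matrix.mul_assoc, ← Matrix.mul_assoc, hE]
    have e3 : C * (Pm A E (k + 1) * B) + 0 * (C * Pm A E k * B) = C * Pm A E (k + 1) * B := by
      rw [Matrix.zero_mul, add_zero, Matrix.mul_assoc]
    rw [e1, e2, e3, Matrix.zero_mul, add_zero]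


theorem Pm_mulVec_mem {x : Fin n → F} {a : ℕ} (ha : 1 ≤ a)
    (hx : ∀ j, a ≤ j → A ^ j *ᵥ x = 0) :
    ∀ d k, a + 2 * d ≤ k + 1 → Pm A E k *ᵥ x ∈ rng (E ^ d)
  | 0, k => fun _ => by
    rw [pow_zero]
    exact mem_rng.mpr ⟨Pm A E k *ᵥ x, Matrix.one_mulVec _⟩
  | (d + 1), k => fun hk => by
    obtain ⟨k', rfl⟩ : ∃ k', k = k' + 2 := ⟨k - 2, by omega⟩
    have hmem : Pm A E k' *ᵥ x ∈ rng (E ^ d) := Pm_mulVec_mem ha hx d k' (by omega)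
    rw [Pm_add_two hAE, Matrix.add_mulVec, hx (k' + 1) (by omega), zero_add,
      ← Matrix.mulVec_mulVec]
    obtain ⟨u, hu⟩ := mem_rng.mp hmem
    refine mem_rng.mpr ⟨u, ?_⟩
    rw [← hu, Matrix.mulVec_mulVec, ← pow_succ']

end Words

end DrazinAux

set_option maxHeartbeats 1600000 in
/-- with `A`, `BC` singular and `ABC = 0`, for `M = [[A,B],[C,0]]`:
`max{i(A), 2 i(BC) − 1} − 1 ≤ i(M) ≤ i(A) + 2 i(BC) + 2`. -/
theorem anti_triangular_one_orthogonal {F : Type*} [Field F] {n m : ℕ}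
    (A : Matrix (Fin n) (Fin n) F) (B : Matrix (Fin n) (Fin m) F)
    (C : Matrix (Fin m) (Fin n) F)
    (hA : ¬ IsUnit A) (hBC : ¬ IsUnit (B * C))
    (hABC : A * (B * C) = 0) :
    max (drazinIndex A) (2 * drazinIndex (B * C) - 1) - 1
        ≤ drazinIndex (Matrix.fromBlocks A B C 0) ∧
    drazinIndex (Matrix.fromBlocks A B C 0)
        ≤ drazinIndex A + 2 * drazinIndex (B * C) + 2 := by
  classical
  set E : Matrix (Fin n) (Fin n) F := B * C with hE
  have hAE : A * E = 0 := hABC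
  set a := drazinIndex A with haDef
  set b := drazinIndex E with hbDef
  set M : Matrix (Fin n ⊕ Fin m) (Fin n ⊕ Fin m) F :=
    Matrix.fromBlocks A B C 0 with hMdef
  set σ := drazinIndex M with hσDef
  have ha1 : 1 ≤ a := DrazinAux.one_le_drazin_of_not_isUnit A hA
  have hb1 : 1 ≤ b := DrazinAux.one_le_drazin_of_not_isUnit E hBC
  have hMp : ∀ k : ℕ, M ^ (k + 1) =
      Matrix.fromBlocks (DrazinAux.Pm A E (k + 2)) (DrazinAux.Pm A E (k + 1) * B)
        (C * DrazinAux.Pm A E (k + 1)) (C * DrazinAux.Pm A E k * B) :=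
    DrazinAux.M_pow hAE hE
  ----------------------------------------------------------------
  -- UPPER BOUND
  ----------------------------------------------------------------
  set N : Matrix (Fin n ⊕ Fin n) (Fin n ⊕ Fin n) F :=
    Matrix.fromBlocks A E (1 : Matrix (Fin n) (Fin n) F) 0 with hNdef
  have hupper : σ ≤ a + 2 * b + 2 := by
    set U : Matrix (Fin n ⊕ Fin m) (Fin n ⊕ Fin n) F :=
      Matrix.fromBlocks (1 : Matrix (Fin n) (Fin n) F) 0 0 C with hU
    set V : Matrix (Fin n ⊕ Fin n) (Fin n ⊕ Fin m) F :=
      Matrix.fromBlocks A B (1 : Matrix (Fin n) (Fin n) F) 0 with hV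
    have hUV : U * V = M := by
      rw [hU, hV, hMdef, Matrix.fromBlocks_multiply]
      simp
    have hVU : V * U = N := by
      rw [hU, hV, hNdef, Matrix.fromBlocks_multiply, hE]
      simp
    have hMN : σ ≤ drazinIndex N + 1 := by
      have h := DrazinAux.drazin_UV_le U V
      rw [hUV, hVU] at h
      exact h
    have hNle : drazinIndex N ≤ a + 2 * b + 1 := by
      apply DrazinAux.drazin_le_of_inj
      intro v hv hv0
      obtain ⟨u, hu⟩ := DrazinAux.mem_rng.mp hv
      rw [hNdef, DrazinAux.N_pow hAE (a + 2 * b), Matrix.fromBlocks_mulVec] at hu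
      have hv0e : Sum.elim (A *ᵥ (v ∘ Sum.inl) + E *ᵥ (v ∘ Sum.inr))
          ((1 : Matrix (Fin n) (Fin n) F) *ᵥ (v ∘ Sum.inl) +
            (0 : Matrix (Fin n) (Fin n) F) *ᵥ (v ∘ Sum.inr)) = 0 := by
        rw [← Matrix.fromBlocks_mulVec, ← hNdef]
        exact hv0
      have hinl : v ∘ Sum.inl = 0 := by
        funext i
        have h := congrFun hv0e (Sum.inr i)
        simpa [Matrix.one_mulVec, Matrix.zero_mulVec] using h
      have hEv : E *ᵥ (v ∘ Sum.inr) = 0 := by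
        funext i
        have h := congrFun hv0e (Sum.inl i)
        simp only [Sum.elim_inl, Pi.zero_apply] at h
        rw [hinl, Matrix.mulVec_zero] at h
        simpa using h
      have hvl : DrazinAux.Pm A E (a + 2 * b + 2) *ᵥ (u ∘ Sum.inl) +
          DrazinAux.Qm E (a + 2 * b + 2) *ᵥ (u ∘ Sum.inr) = v ∘ Sum.inl := by
        funext i
        exact congrFun hu (Sum.inl i)
      have hvr : DrazinAux.Pm A E (a + 2 * b + 1) *ᵥ (u ∘ Sum.inl) +
          DrazinAux.Qm E (a + 2 * b + 1) *ᵥ (u ∘ Sum.inr) = v ∘ Sum.inr := by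
        funext i
        exact congrFun hu (Sum.inr i)
      have hAP : A * DrazinAux.Pm A E (a + 2 * b + 2) = A ^ (a + 2 * b + 2) :=
        DrazinAux.A_mul_Pm hAE (a + 2 * b + 1)
      have hAx : A ^ (a + 2 * b + 2) *ᵥ (u ∘ Sum.inl) = 0 := by
        have h0 : A *ᵥ (DrazinAux.Pm A E (a + 2 * b + 2) *ᵥ (u ∘ Sum.inl) +
            DrazinAux.Qm E (a + 2 * b + 2) *ᵥ (u ∘ Sum.inr)) = 0 := by
          rw [hvl, hinl, Matrix.mulVec_zero]
        rw [Matrix.mulVec_add, Matrix.mulVec_mulVec, Matrix.mulVec_mulVec, hAP,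
          DrazinAux.A_mul_Qm hAE, Matrix.zero_mulVec, add_zero] at h0
        exact h0
      have hxa : A ^ a *ᵥ (u ∘ Sum.inl) = 0 := by
        have hker := DrazinAux.ker_pow_eq_of_drazin_le A (le_refl a)
          (by omega : a ≤ a + 2 * b + 2)
        have hmem : (u ∘ Sum.inl) ∈ LinearMap.ker (A ^ (a + 2 * b + 2)).mulVecLin := by
          simpa [LinearMap.mem_ker, Matrix.mulVecLin_apply] using hAx
        rw [hker] at hmem
        simpa [LinearMap.mem_ker, Matrix.mulVecLin_apply] using hmem
      have hx : ∀ j, a ≤ j → A ^ j *ᵥ (u ∘ Sum.inl) = 0 := by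
        intro j hj
        have hsplit : A ^ j = A ^ (j - a) * A ^ a := by
          rw [← pow_add]; congr 1; omega
        rw [hsplit, ← Matrix.mulVec_mulVec, hxa, Matrix.mulVec_zero]
      have hPmem : DrazinAux.Pm A E (a + 2 * b + 1) *ᵥ (u ∘ Sum.inl) ∈
          DrazinAux.rng (E ^ (b + 1)) :=
        DrazinAux.Pm_mulVec_mem hAE ha1 hx (b + 1) (a + 2 * b + 1) (by omega)
      have hQmem : DrazinAux.Qm E (a + 2 * b + 1) *ᵥ (u ∘ Sum.inr) ∈
          DrazinAux.rng (E ^ (b + 1)) := by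
        obtain ⟨t, ht | ht⟩ := Nat.even_or_odd' (a + 2 * b + 1)
        · obtain ⟨t', rfl⟩ : ∃ t', t = t' + 1 := ⟨t - 1, by omega⟩
          have hQ : DrazinAux.Qm E (a + 2 * b + 1) = E ^ (t' + 1) := by
            rw [ht, show 2 * (t' + 1) = 2 * t' + 2 by ring, DrazinAux.Qm_even]
          rw [hQ]
          have hle : DrazinAux.rng (E ^ (t' + 1)) ≤ DrazinAux.rng (E ^ (b + 1)) :=
            DrazinAux.rng_pow_le E (by omega)
          exact hle (DrazinAux.mem_rng.mpr ⟨u ∘ Sum.inr, rfl⟩)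
        · rw [ht, DrazinAux.Qm_odd, Matrix.zero_mulVec]
          exact Submodule.zero_mem _
      have hzmem : (v ∘ Sum.inr) ∈ DrazinAux.rng (E ^ b) := by
        rw [← hvr]
        exact DrazinAux.rng_pow_le E (by omega : b ≤ b + 1)
          (Submodule.add_mem _ hPmem hQmem)
      have hz0 : v ∘ Sum.inr = 0 :=
        DrazinAux.inj_of_rank_stab E (DrazinAux.drazin_mem E) _ hzmem hEv
      have hvelim : v = Sum.elim (v ∘ Sum.inl) (v ∘ Sum.inr) :=
        (Sum.elim_comp_inl_inr v).symm
      rw [hvelim, hinl, hz0]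
      funext i
      cases i <;> simp
    omega
  ----------------------------------------------------------------
  -- LOWER BOUND 1 : a ≤ σ + 1
  ----------------------------------------------------------------
  set At : Matrix (Fin n ⊕ Fin m) (Fin n ⊕ Fin m) F :=
    Matrix.fromBlocks A 0 0 0 with hAt
  have hAtpow : ∀ k : ℕ, At ^ (k + 1) = Matrix.fromBlocks (A ^ (k + 1)) 0 0 0 := by
    intro k
    induction k with
    | zero =>
      show At ^ 1 = Matrix.fromBlocks (A ^ 1) 0 0 0
      rw [pow_one, pow_one]
    | succ k ih =>
      rw [pow_succ', ih, hAt, Matrix.fromBlocks_multiply]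
      simp [← pow_succ']
  have hS : ∀ j : ℕ, At * M ^ (j + 1) =
      Matrix.fromBlocks (A ^ (j + 2)) (A ^ (j + 1) * B) 0 0 := by
    intro j
    have hAP1 : A * DrazinAux.Pm A E (j + 2) = A ^ (j + 2) := DrazinAux.A_mul_Pm hAE (j + 1)
    have hAP2 : A * DrazinAux.Pm A E (j + 1) = A ^ (j + 1) := DrazinAux.A_mul_Pm hAE j
    rw [hMp j, hAt, Matrix.fromBlocks_multiply]
    simp only [Matrix.zero_mul, Matrix.mul_zero, add_zero, zero_add]
    rw [← Matrix.mul_assoc, hAP1, hAP2]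
  have hS2 : ∀ i j : ℕ, At ^ (i + 1) * M ^ (j + 1) =
      Matrix.fromBlocks (A ^ (i + j + 2)) (A ^ (i + j + 1) * B) 0 0 := by
    intro i j
    have hAP1 : A ^ (i + 1) * DrazinAux.Pm A E (j + 2) = A ^ (i + j + 2) := by
      have h := DrazinAux.Apow_mul_Pm hAE i (j + 1)
      rwa [show i + (j + 1) + 1 = i + j + 2 by ring] at h
    have hAP2 : A ^ (i + 1) * DrazinAux.Pm A E (j + 1) = A ^ (i + j + 1) :=
      DrazinAux.Apow_mul_Pm hAE i j
    rw [hMp j, hAtpow i, Matrix.fromBlocks_multiply]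
    simp only [Matrix.zero_mul, Matrix.mul_zero, add_zero, zero_add]
    rw [← Matrix.mul_assoc, hAP1, hAP2]
  have hAtRank : ∀ k : ℕ, (At ^ (k + 1)).rank = (A ^ (k + 1)).rank := by
    intro k
    rw [hAtpow k]
    exact DrazinAux.rank_fromBlocks_zero _
  have hlow1 : a ≤ σ + 1 := by
    rcases Nat.eq_zero_or_pos σ with hσ0 | hσpos
    · -- σ = 0
      have hdM : drazinIndex M = 0 := by rw [← hσDef, hσ0]
      have htop1 : DrazinAux.rng (M ^ 1) = (⊤ : Submodule F (Fin n ⊕ Fin m → F)) := by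
        have h := DrazinAux.rng_pow_eq_of_drazin_le M (le_of_eq hdM) (Nat.zero_le 1)
        rw [h, pow_zero, DrazinAux.rng, Matrix.mulVecLin_one, LinearMap.range_id]
      have htop2 : DrazinAux.rng (M ^ 2) = (⊤ : Submodule F (Fin n ⊕ Fin m → F)) := by
        have h := DrazinAux.rng_pow_eq_of_drazin_le M (le_of_eq hdM) (Nat.zero_le 2)
        rw [h, pow_zero, DrazinAux.rng, Matrix.mulVecLin_one, LinearMap.range_id]
      have e1 : DrazinAux.rng (At * M ^ 1) = DrazinAux.rng At := by
        rw [DrazinAux.rng_mul, htop1, Submodule.map_top]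
        rfl
      have e2 : DrazinAux.rng (At * M ^ 2) = DrazinAux.rng At := by
        rw [DrazinAux.rng_mul, htop2, Submodule.map_top]
        rfl
      have e3 : At * M ^ 2 = At ^ 2 * M ^ 1 := by
        have l1 : At * M ^ 2 = Matrix.fromBlocks (A ^ 3) (A ^ 2 * B) 0 0 := hS 1
        have l2 : At ^ 2 * M ^ 1 = Matrix.fromBlocks (A ^ 3) (A ^ 2 * B) 0 0 := hS2 1 0
        rw [l1, l2]
      have hsub : DrazinAux.rng (At ^ 1) ≤ DrazinAux.rng (At ^ 2) := by
        rw [pow_one, ← e2, e3]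
        exact DrazinAux.rng_mul_le _ _
      have hsub2 : DrazinAux.rng (At ^ 2) ≤ DrazinAux.rng (At ^ 1) := by
        have h12 : (1 : ℕ) ≤ 2 := by omega
        exact DrazinAux.rng_pow_le At h12
      have heq : DrazinAux.rng (At ^ 1) = DrazinAux.rng (At ^ 2) :=
        le_antisymm hsub hsub2
      have hrk : (At ^ 1).rank = (At ^ 2).rank := by
        rw [DrazinAux.rank_eq_rng, DrazinAux.rank_eq_rng, heq]
      have t1 : (At ^ 1).rank = (A ^ 1).rank := hAtRank 0
      have t2 : (At ^ 2).rank = (A ^ 2).rank := hAtRank 1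
      have hrkA : (A ^ 1).rank = (A ^ 2).rank := by rw [← t1, ← t2]; exact hrk
      have hfin : a ≤ 1 := by
        rw [haDef, DrazinAux.drazin_le_iff]
        exact hrkA
      omega
    · -- σ ≥ 1
      obtain ⟨s, hs⟩ : ∃ s, σ = s + 1 := ⟨σ - 1, by omega⟩
      have hk1 : drazinIndex M ≤ s + 1 := by rw [← hσDef]; omega

      have e1 : DrazinAux.rng (At * M ^ (2 * s + 3)) =
          DrazinAux.rng (At * M ^ (s + 1)) := by
        rw [DrazinAux.rng_mul, DrazinAux.rng_mul,
          DrazinAux.rng_pow_eq_of_drazin_le M hk1 (by omega)]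
      have e2 : At * M ^ (2 * s + 3) = At ^ (s + 3) * M ^ (s + 1) := by
        have l1 : At * M ^ (2 * s + 2 + 1) =
            Matrix.fromBlocks (A ^ (2 * s + 2 + 2)) (A ^ (2 * s + 2 + 1) * B) 0 0 :=
          hS (2 * s + 2)
        have l2 : At ^ (s + 3) * M ^ (s + 1) =
            Matrix.fromBlocks (A ^ (s + 2 + s + 2)) (A ^ (s + 2 + s + 1) * B) 0 0 :=
          hS2 (s + 2) s
        have l1' : At * M ^ (2 * s + 3) =
            Matrix.fromBlocks (A ^ (s + 2 + s + 2)) (A ^ (s + 2 + s + 1) * B) 0 0 := by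
          rw [show s + 2 + s + 2 = 2 * s + 2 + 2 by ring,
            show s + 2 + s + 1 = 2 * s + 2 + 1 by ring]
          exact l1
        rw [l1', l2]
      have l4 : At ^ (s + 2) = Matrix.fromBlocks (A ^ (s + 2)) 0 0 0 := hAtpow (s + 1)
      have e3 : At ^ (s + 2) = (At * M ^ (s + 1)) * Matrix.fromBlocks
          (1 : Matrix (Fin n) (Fin n) F) 0 0 (0 : Matrix (Fin m) (Fin m) F) := by
        rw [l4, hS s, Matrix.fromBlocks_multiply]
        simp
      have hchain : DrazinAux.rng (At ^ (s + 2)) ≤ DrazinAux.rng (At ^ (s + 3)) := by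
        calc DrazinAux.rng (At ^ (s + 2))
            ≤ DrazinAux.rng (At * M ^ (s + 1)) := by
              rw [e3]; exact DrazinAux.rng_mul_le _ _
          _ = DrazinAux.rng (At * M ^ (2 * s + 3)) := e1.symm
          _ = DrazinAux.rng (At ^ (s + 3) * M ^ (s + 1)) := by rw [e2]
          _ ≤ DrazinAux.rng (At ^ (s + 3)) := DrazinAux.rng_mul_le _ _
      have hsub2 : DrazinAux.rng (At ^ (s + 3)) ≤ DrazinAux.rng (At ^ (s + 2)) := by
        have h12 : s + 2 ≤ s + 3 := by omega
        exact DrazinAux.rng_pow_le At h12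
      have heq : DrazinAux.rng (At ^ (s + 2)) = DrazinAux.rng (At ^ (s + 3)) :=
        le_antisymm hchain hsub2
      have hrk : (At ^ (s + 2)).rank = (At ^ (s + 3)).rank := by
        rw [DrazinAux.rank_eq_rng, DrazinAux.rank_eq_rng, heq]
      have t1 : (At ^ (s + 2)).rank = (A ^ (s + 2)).rank := hAtRank (s + 1)
      have t2 : (At ^ (s + 3)).rank = (A ^ (s + 3)).rank := hAtRank (s + 2)
      have hrkA : (A ^ (s + 2)).rank = (A ^ (s + 3)).rank := by rw [← t1, ← t2]; exact hrk
      have hfin : a ≤ s + 2 := by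
        rw [haDef, DrazinAux.drazin_le_iff]
        exact hrkA
      omega
  ----------------------------------------------------------------
  -- LOWER BOUND 2 : 2b ≤ σ + 2
  ----------------------------------------------------------------
  have hlow2 : 2 * b ≤ σ + 2 := by
    set XC : Matrix (Fin n ⊕ Fin m) (Fin n ⊕ Fin m) F :=
      Matrix.fromBlocks 0 0 C 0 with hXC
    have hT : ∀ t : ℕ, M ^ (2 * t + 1) * XC =
        Matrix.fromBlocks (E ^ (t + 1)) 0 0 (0 : Matrix (Fin m) (Fin m) F) := by
      intro t
      have hMt : M ^ (2 * t + 1) =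
          Matrix.fromBlocks (DrazinAux.Pm A E (2 * t + 2)) (DrazinAux.Pm A E (2 * t + 1) * B)
            (C * DrazinAux.Pm A E (2 * t + 1)) (C * DrazinAux.Pm A E (2 * t) * B) :=
        hMp (2 * t)
      have hodd : DrazinAux.Pm A E (2 * t + 1) * E = E ^ (t + 1) :=
        (DrazinAux.Pm_mul_E hAE t).2
      have heven : DrazinAux.Pm A E (2 * t) * E = 0 := (DrazinAux.Pm_mul_E hAE t).1
      have k1 : DrazinAux.Pm A E (2 * t + 1) * B * C = E ^ (t + 1) := by
        rw [Matrix.mul_assoc, ← hE, hodd]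
      have k2 : C * DrazinAux.Pm A E (2 * t) * B * C = 0 := by
        rw [Matrix.mul_assoc, ← hE, Matrix.mul_assoc, heven, Matrix.mul_zero]
      rw [hMt, hXC, Matrix.fromBlocks_multiply]
      simp only [Matrix.mul_zero, Matrix.zero_mul, add_zero, zero_add]
      rw [k1, k2]
    have hσT : drazinIndex Mᵀ = σ := by
      rw [DrazinAux.drazin_transpose]
    set t0 := σ / 2 with ht0
    have hrT : DrazinAux.rng ((Mᵀ) ^ (2 * t0 + 3)) = DrazinAux.rng ((Mᵀ) ^ (2 * t0 + 1)) :=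
      DrazinAux.rng_pow_eq_of_drazin_le (Mᵀ) (by rw [hσT]; omega) (by omega)
    have key : (M ^ (2 * t0 + 1) * XC).rank = (M ^ (2 * t0 + 3) * XC).rank := by
      have c1 : (M ^ (2 * t0 + 1) * XC).rank = (XCᵀ * (Mᵀ) ^ (2 * t0 + 1)).rank := by
        rw [← Matrix.rank_transpose (M ^ (2 * t0 + 1) * XC), Matrix.transpose_mul,
          Matrix.transpose_pow]
      have c2 : (M ^ (2 * t0 + 3) * XC).rank = (XCᵀ * (Mᵀ) ^ (2 * t0 + 3)).rank := by
        rw [← Matrix.rank_transpose (M ^ (2 * t0 + 3) * XC), Matrix.transpose_mul,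
          Matrix.transpose_pow]
      rw [c1, c2, DrazinAux.rank_eq_rng, DrazinAux.rank_eq_rng, DrazinAux.rng_mul,
        DrazinAux.rng_mul, hrT]
    have hT1 : M ^ (2 * t0 + 1) * XC =
        Matrix.fromBlocks (E ^ (t0 + 1)) 0 0 (0 : Matrix (Fin m) (Fin m) F) := hT t0
    have hT2 : M ^ (2 * t0 + 3) * XC =
        Matrix.fromBlocks (E ^ (t0 + 2)) 0 0 (0 : Matrix (Fin m) (Fin m) F) := by
      have h := hT (t0 + 1)
      rw [show 2 * (t0 + 1) + 1 = 2 * t0 + 3 by ring] at h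
      exact h
    rw [hT1, hT2, DrazinAux.rank_fromBlocks_zero, DrazinAux.rank_fromBlocks_zero] at key
    have hble : b ≤ t0 + 1 := by
      rw [hbDef, DrazinAux.drazin_le_iff]
      exact key
    omega
  refine ⟨?_, hupper⟩
  have hmax : max a (2 * b - 1) ≤ σ + 1 := max_le (by omega) (by omega)
  omega
end

section
/- Let A be an n×n singular matrix, B an n×m matrix, C an m×n matrix over a field F with B·C = 0, and let M = [[A, B],[C, 0]]. Then i(A) ≤ i(M) ≤ i(A) + 2 and M^D = [[A^D, (A^D)²·B],[C·(A^D)², C·(A^D)³·B]]. -/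
open Matrix Polynomial

/-- If the rank of powers of `N` stabilizes at `a`, then `N ^ a` factors
through any higher power. -/
lemma exists_right_factor_of_rank_stable {p : Type*} [Fintype p] [DecidableEq p]
    {F : Type*} [Field F] (N : Matrix p p F) {a b : ℕ}
    (ha : (N ^ a).rank = (N ^ (a + 1)).rank) (hab : a ≤ b) :
    ∃ Y : Matrix p p F, N ^ a = N ^ b * Y := by
  have hle : ∀ j : ℕ, LinearMap.range (N ^ (j + 1)).mulVecLin ≤
      LinearMap.range (N ^ j).mulVecLin := by
    intro j
    rw [pow_succ, Matrix.mulVecLin_mul, LinearMap.range_comp]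
    exact LinearMap.map_le_range
  have hstab : LinearMap.range (N ^ (a + 1)).mulVecLin =
      LinearMap.range (N ^ a).mulVecLin :=
    Submodule.eq_of_le_of_finrank_eq (hle a) ha.symm
  have hrange : ∀ j, a ≤ j →
      LinearMap.range (N ^ j).mulVecLin = LinearMap.range (N ^ a).mulVecLin := by
    intro j hj
    induction j, hj using Nat.le_induction with
    | base => rfl
    | succ j hj ih =>
      have h1 : ∀ i : ℕ, LinearMap.range (N ^ (i + 1)).mulVecLin =
          Submodule.map N.mulVecLin (LinearMap.range (N ^ i).mulVecLin) := by
        intro i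
        rw [pow_succ', Matrix.mulVecLin_mul, LinearMap.range_comp]
      rw [h1, ih, ← h1, hstab]
  have hcol : ∀ j : p, ∃ v : p → F, (N ^ b).mulVec v = (N ^ a).mulVec (Pi.single j 1) := by
    intro j
    have : (N ^ a).mulVec (Pi.single j 1) ∈ LinearMap.range (N ^ b).mulVecLin := by
      rw [hrange b hab]
      exact ⟨Pi.single j 1, rfl⟩
    obtain ⟨v, hv⟩ := this
    exact ⟨v, hv⟩
  choose V hV using hcol
  refine ⟨Matrix.of (fun i j => V j i), ?_⟩
  ext i j
  have := congrFun (hV j) i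
  simp only [Matrix.mulVec_single, mul_one, Pi.smul_apply, MulOpposite.op_one, one_smul, Matrix.col_apply] at this
  rw [Matrix.mul_apply, ← this]
  simp [Matrix.mulVec, dotProduct]

/-- In a monoid, an element `Z` commuting with `M` and satisfying `Z*M*Z = Z`
equals `M^j * Z^(j+1)` for every `j`. -/
lemma drazin_pow_left {R : Type*} [Monoid R] {M Z : R}
    (h2 : Z * M * Z = Z) (h3 : M * Z = Z * M) (j : ℕ) :
    Z = M ^ j * Z ^ (j + 1) := by
  induction j with
  | zero => simp
  | succ j ih =>
    have hz : Z = M * Z ^ 2 := by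
      calc Z = Z * M * Z := h2.symm
      _ = M * Z * Z := by rw [← h3]
      _ = M * Z ^ 2 := by rw [mul_assoc, sq]
    have : M ^ (j + 1) * Z ^ (j + 2) = Z := by
      calc M ^ (j + 1) * Z ^ (j + 2) = (M ^ j * M) * (Z ^ 2 * Z ^ j) := by
            rw [pow_succ, pow_add, pow_mul_comm]
      _ = M ^ j * (M * Z ^ 2 * Z ^ j) := by rw [mul_assoc, ← mul_assoc M]
      _ = M ^ j * (Z * Z ^ j) := by rw [← hz]
      _ = M ^ j * Z ^ (j + 1) := by rw [← pow_succ']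
      _ = Z := ih.symm
    exact this.symm

lemma drazin_pow_right {R : Type*} [Monoid R] {M Z : R}
    (h2 : Z * M * Z = Z) (h3 : M * Z = Z * M) (j : ℕ) :
    Z = Z ^ (j + 1) * M ^ j := by
  induction j with
  | zero => simp
  | succ j ih =>
    have hz : Z = Z ^ 2 * M := by
      calc Z = Z * M * Z := h2.symm
      _ = Z * (Z * M) := by rw [mul_assoc, ← h3, h3]
      _ = Z ^ 2 * M := by rw [← mul_assoc, sq]
    have : Z ^ (j + 2) * M ^ (j + 1) = Z := by
      calc Z ^ (j + 2) * M ^ (j + 1) = (Z ^ j * Z ^ 2) * (M * M ^ j) := by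
            rw [pow_succ' M j, pow_add]
      _ = Z ^ j * (Z ^ 2 * M * M ^ j) := by rw [mul_assoc, ← mul_assoc (Z ^ 2)]
      _ = Z ^ j * (Z * M ^ j) := by rw [← hz]
      _ = Z ^ (j + 1) * M ^ j := by rw [← mul_assoc, ← pow_succ]
      _ = Z := ih.symm
    exact this.symm

/-- with `A` singular and `BC = 0`, for `M = [[A,B],[C,0]]`:
`i(A) ≤ i(M) ≤ i(A) + 2` and
`M^D = [[A^D, (A^D)² B],[C (A^D)², C (A^D)³ B]]`. -/
theorem anti_triangular_BC_zero {F : Type*} [Field F] {n m : ℕ}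
    (A : Matrix (Fin n) (Fin n) F) (B : Matrix (Fin n) (Fin m) F)
    (C : Matrix (Fin m) (Fin n) F)
    (hA : ¬ IsUnit A) (hBC : B * C = 0)
    (AD : Matrix (Fin n) (Fin n) F) (hAD : IsDrazinInverse A AD)
    (MD : Matrix (Fin n ⊕ Fin m) (Fin n ⊕ Fin m) F)
    (hMD : IsDrazinInverse (Matrix.fromBlocks A B C 0) MD) :
    drazinIndex A ≤ drazinIndex (Matrix.fromBlocks A B C 0) ∧
    drazinIndex (Matrix.fromBlocks A B C 0) ≤ drazinIndex A + 2 ∧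
    MD = Matrix.fromBlocks AD (AD ^ 2 * B) (C * AD ^ 2) (C * AD ^ 3 * B) := by
  obtain ⟨h1, h2, h3⟩ := hAD
  set k := drazinIndex A with hk
  set M : Matrix (Fin n ⊕ Fin m) (Fin n ⊕ Fin m) F := Matrix.fromBlocks A B C 0 with hM
  set X : Matrix (Fin n ⊕ Fin m) (Fin n ⊕ Fin m) F :=
    Matrix.fromBlocks AD (AD ^ 2 * B) (C * AD ^ 2) (C * AD ^ 3 * B) with hX
  -- helper : B * (C * P) = 0
  have hB0 : ∀ (p : Type) [Fintype p] (P : Matrix (Fin n) p F), B * (C * P) = 0 := by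
    intro p _ P
    rw [← Matrix.mul_assoc, hBC, Matrix.zero_mul]
  -- derived Drazin identities for A
  have hADD : A * (AD * AD) = AD := by
    rw [← Matrix.mul_assoc, h3, Matrix.mul_assoc, ← Matrix.mul_assoc, h2]
  have hDDA : AD * AD * A = AD := by
    rw [Matrix.mul_assoc, ← h3, ← Matrix.mul_assoc, h2]
  have hpow : ∀ j, k ≤ j → A ^ (j + 1) * AD = A ^ j := by
    intro j hj
    obtain ⟨d, rfl⟩ := Nat.exists_eq_add_of_le hj
    calc A ^ (k + d + 1) * AD = A ^ d * (A ^ (k + 1) * AD) := by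
          rw [← Matrix.mul_assoc, ← pow_add]
          congr 2
          omega
    _ = A ^ d * A ^ k := by rw [h1]
    _ = A ^ (k + d) := by rw [← pow_add]; congr 1; omega
  have hp1 : A ^ (k + 1) * AD = A ^ k := h1
  have hp2 : A ^ (k + 2) * AD = A ^ (k + 1) := hpow (k + 1) (by omega)
  have hp3 : A ^ (k + 3) * AD = A ^ (k + 2) := hpow (k + 2) (by omega)
  -- block form of powers of M
  have hM2 : ∀ j : ℕ, M ^ (j + 2) =
      Matrix.fromBlocks (A ^ (j + 2)) (A ^ (j + 1) * B) (C * A ^ (j + 1)) (C * A ^ j * B) := by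
    intro j
    induction j with
    | zero =>
      show M ^ 2 = _
      rw [sq, hM, Matrix.fromBlocks_multiply, Matrix.fromBlocks_inj]
      refine ⟨?_, ?_, ?_, ?_⟩
      · rw [hBC, add_zero, ← sq]
      · rw [Matrix.mul_zero, add_zero, pow_one]
      · rw [Matrix.zero_mul, add_zero, pow_one]
      · rw [Matrix.zero_mul, add_zero, pow_zero, Matrix.mul_one]
    | succ j ih =>
      have hstep : M ^ (j + 3) = M * M ^ (j + 2) := by rw [← pow_succ']
      rw [show j + 1 + 2 = j + 3 from rfl, hstep, ih, hM, Matrix.fromBlocks_multiply,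
        Matrix.fromBlocks_inj]
      refine ⟨?_, ?_, ?_, ?_⟩
      · rw [hB0 _ _, add_zero, ← pow_succ']
      · rw [Matrix.mul_assoc C, hB0 _ _, add_zero, ← Matrix.mul_assoc, ← pow_succ']
      · rw [Matrix.zero_mul, add_zero]
      · rw [Matrix.zero_mul, add_zero, ← Matrix.mul_assoc]
  have hM1 : ∀ j : ℕ, ∃ S, M ^ (j + 1) =
      Matrix.fromBlocks (A ^ (j + 1)) (A ^ j * B) (C * A ^ j) S := by
    intro j
    cases j with
    | zero => exact ⟨0, by rw [pow_one, hM]; simp⟩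
    | succ j => exact ⟨C * A ^ j * B, hM2 j⟩
  have hAADB : A * (AD ^ 2 * B) = AD * B := by
    rw [← Matrix.mul_assoc, sq, ← Matrix.mul_assoc, h3, h2]
  have hADDA : AD ^ 2 * A = AD := by rw [sq]; exact hDDA
  -- M * X
  have hMX : M * X =
      Matrix.fromBlocks (A * AD) (A * (AD ^ 2 * B)) (C * AD) (C * (AD ^ 2 * B)) := by
    rw [hM, hX, Matrix.fromBlocks_multiply, Matrix.fromBlocks_inj]
    refine ⟨?_, ?_, ?_, ?_⟩
    · rw [hB0 _ _, add_zero]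
    · rw [Matrix.mul_assoc C, hB0 _ _, add_zero]
    · rw [Matrix.zero_mul, add_zero]
    · rw [Matrix.zero_mul, add_zero]
  -- commutation
  have hcomm : M * X = X * M := by
    rw [hMX, hX, hM, Matrix.fromBlocks_multiply, Matrix.fromBlocks_inj]
    refine ⟨?_, ?_, ?_, ?_⟩ <;> simp only [Matrix.mul_assoc, hB0, hBC, Matrix.mul_zero, Matrix.zero_mul, add_zero, zero_add]
    · exact h3
    · exact hAADB
    · rw [sq, hDDA]
  -- X * M * X = X
  have hXMX : X * M * X = X := by
    rw [Matrix.mul_assoc, hMX, hX, Matrix.fromBlocks_multiply, Matrix.fromBlocks_inj]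
    refine ⟨?_, ?_, ?_, ?_⟩ <;> simp only [Matrix.mul_assoc, hB0, hBC, Matrix.mul_zero, Matrix.zero_mul, add_zero, zero_add]
    · rw [← Matrix.mul_assoc, h2]
    · rw [hAADB, ← Matrix.mul_assoc, ← sq]
    · rw [← Matrix.mul_assoc (AD ^ 2) A AD, hADDA, ← sq]
    · rw [hAADB, ← Matrix.mul_assoc (AD ^ 2) AD B, ← pow_succ]
  -- M^(k+3) * X = M^(k+2)
  have hMk : M ^ (k + 3) * X = M ^ (k + 2) := by
    rw [show k + 3 = k + 1 + 2 from rfl, hM2 (k + 1), hX, hM2 k,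
      Matrix.fromBlocks_multiply, Matrix.fromBlocks_inj]
    refine ⟨?_, ?_, ?_, ?_⟩ <;> simp only [Matrix.mul_assoc, hB0, hBC, Matrix.mul_zero, Matrix.zero_mul, add_zero, zero_add]
    · exact hp3
    · show A ^ (k + 3) * (AD ^ 2 * B) = A ^ (k + 1) * B
      rw [← Matrix.mul_assoc, sq, ← Matrix.mul_assoc, hp3, hp2]
    · show C * (A ^ (k + 2) * AD) = C * A ^ (k + 1)
      rw [hp2]
    · show C * (A ^ (k + 2) * (AD ^ 2 * B)) = C * (A ^ k * B)
      rw [← Matrix.mul_assoc (A ^ (k + 2)) (AD ^ 2) B,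
        show A ^ (k + 2) * AD ^ 2 = A ^ k from by rw [sq, ← Matrix.mul_assoc, hp2, hp1]]
  -- idempotents
  have hidem : IsIdempotentElem (M * X) := by
    show M * X * (M * X) = M * X
    calc M * X * (M * X) = M * (X * M * X) := by rw [mul_assoc, ← mul_assoc X]
    _ = M * X := by rw [hXMX]
  -- upper bound
  obtain ⟨g1, g2, g3⟩ := hMD
  set q := drazinIndex M with hq
  have memM : (M ^ (k + 2)).rank = (M ^ (k + 2 + 1)).rank := by
    refine le_antisymm ?_ ?_
    · rw [← hMk]; exact Matrix.rank_mul_le_left _ _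
    · rw [pow_succ]; exact Matrix.rank_mul_le_left _ _
  have memM' : (k + 2) ∈ {j : ℕ | (M ^ j).rank = (M ^ (j + 1)).rank} := memM
  have hub : q ≤ k + 2 := Nat.sInf_le memM'
  have hne : {j : ℕ | (M ^ j).rank = (M ^ (j + 1)).rank}.Nonempty := ⟨k + 2, memM'⟩
  have hqmem : (M ^ q).rank = (M ^ (q + 1)).rank := Nat.sInf_mem hne
  obtain ⟨Y, hY⟩ := exists_right_factor_of_rank_stable M hqmem hub
  have hcX : Commute M X := hcomm
  have hXMk3 : X * M ^ (k + 3) = M ^ (k + 3) * X := (hcX.symm.pow_right (k + 3))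
  have hMqX : M ^ (q + 1) * X = M ^ q := by
    calc M ^ (q + 1) * X = X * M ^ (q + 1) := hcX.pow_left (q + 1)
    _ = X * (M * M ^ q) := by rw [pow_succ']
    _ = X * (M * (M ^ (k + 2) * Y)) := by rw [hY]
    _ = X * M ^ (k + 3) * Y := by rw [← mul_assoc M, ← pow_succ', ← mul_assoc]
    _ = M ^ (k + 3) * X * Y := by rw [hXMk3]
    _ = M ^ (k + 2) * Y := by rw [hMk]
    _ = M ^ q := hY.symm
  -- uniqueness: MD = X
  have hcMD : Commute M MD := g3
  have hMDMq : MD * M ^ (q + 1) = M ^ (q + 1) * MD := (hcMD.symm.pow_right (q + 1))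
  have hXfin : X = MD * (M * X) := by
    calc X = M ^ q * X ^ (q + 1) := drazin_pow_left hXMX hcomm q
    _ = MD * M ^ (q + 1) * X ^ (q + 1) := by rw [hMDMq, g1]
    _ = MD * (M ^ (q + 1) * X ^ (q + 1)) := by rw [mul_assoc]
    _ = MD * (M * X) ^ (q + 1) := by rw [← hcX.mul_pow]
    _ = MD * (M * X) := by rw [hidem.pow_succ_eq q]
  have hidem2 : IsIdempotentElem (MD * M) := by
    show MD * M * (MD * M) = MD * M
    calc MD * M * (MD * M) = MD * M * MD * M := by rw [← mul_assoc]
    _ = MD * M := by rw [g2]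
  have hMDfin : MD = MD * (M * X) := by
    calc MD = MD ^ (q + 1) * M ^ q := drazin_pow_right g2 g3 q
    _ = MD ^ (q + 1) * (M ^ (q + 1) * X) := by rw [hMqX]
    _ = MD ^ (q + 1) * M ^ (q + 1) * X := by rw [mul_assoc]
    _ = (MD * M) ^ (q + 1) * X := by rw [← hcMD.symm.mul_pow]
    _ = MD * M * X := by rw [hidem2.pow_succ_eq q]
    _ = MD * (M * X) := by rw [mul_assoc]
  have hMDX : MD = X := by rw [hMDfin, ← hXfin]
  -- lower bound
  have hlow : k ≤ q := by
    rcases Nat.eq_zero_or_pos q with hq0 | hpos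
    · exfalso
      rw [hq0] at hMqX
      simp only [zero_add, pow_one, pow_zero] at hMqX
      rw [hMX, ← Matrix.fromBlocks_one, Matrix.fromBlocks_inj] at hMqX
      exact hA (IsUnit.of_mul_eq_one _ hMqX.1)
    · obtain ⟨r, hr⟩ := Nat.exists_eq_succ_of_ne_zero (Nat.pos_iff_ne_zero.mp hpos)
      rw [hr] at hMqX ⊢
      obtain ⟨S, hS⟩ := hM1 r
      rw [show r + 1 + 1 = r + 2 from rfl, hM2 r, hX, Matrix.fromBlocks_multiply, hS,
        Matrix.fromBlocks_inj] at hMqX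
      obtain ⟨e11, -, -, -⟩ := hMqX
      rw [Matrix.mul_assoc (A ^ (r + 1)) B, hB0 _ _, Matrix.mul_zero, add_zero] at e11
      have hr1 : (A ^ (r + 1)).rank ≤ (A ^ (r + 2)).rank := by
        rw [← e11]; exact Matrix.rank_mul_le_left _ _
      have hr2 : (A ^ (r + 2)).rank ≤ (A ^ (r + 1)).rank := by
        rw [pow_succ]; exact Matrix.rank_mul_le_left _ _
      have hmemA : (r + 1) ∈ {j : ℕ | (A ^ j).rank = (A ^ (j + 1)).rank} :=
        le_antisymm hr1 hr2
      exact Nat.sInf_le hmemA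
  exact ⟨hlow, hub, hMDX⟩
end

section
/- Let A be an n×n matrix, B an n×m matrix, C an m×n matrix over a field F, and suppose B·C is invertible. Let M = [[A, B],[C, 0]]. Then: (1) M is invertible if and only if both B and C are invertible (in particular m = n); (2) i(M) ≤ 1, i.e., M is group invertible, and M^D = [[0, (BC)⁻¹·B],[C·(BC)⁻¹, −C·(BC)⁻¹·A·(BC)⁻¹·B]]. -/
open Matrix Polynomial

/-!
With `K = (BC)⁻¹`, the matrix `X = [[0, KB], [CK, -CKAKB]]` satisfies
`MX = XM = diag(1, CKB)`, and from this `MMX = M` and `XMX = X`: `X` is a group inverse of `M`.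
A group inverse forces the Drazin index to be at most `1`, and then every Drazin inverse is a
group inverse, which is unique. Since matrices over a field are Dedekind-finite, `M` is
invertible iff `MX = 1`, i.e. iff `CKB = 1`, which says exactly that `CK` is a two-sided inverse
of `B` and `KB` one of `C`.
-/

def IsGroupInverse {R : Type*} [Monoid R] (a x : R) : Prop :=
  a * a * x = a ∧ x * a * x = x ∧ a * x = x * a

namespace IsGroupInverse

variable {R : Type*} [Monoid R] {a x y : R}

theorem mul_mul_self (h : IsGroupInverse a x) : a * x * a = a := by
  obtain ⟨h₁, -, h₃⟩ := h
  rw [mul_assoc, ← h₃, ← mul_assoc, h₁]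

theorem unique (hx : IsGroupInverse a x) (hy : IsGroupInverse a y) : x = y := by
  have hxy : a * x = a * y :=
    calc a * x = x * a * (a * y) := by rw [hx.2.2, mul_assoc, ← mul_assoc a, hy.1]
      _ = a * y := by rw [← hx.2.2, ← mul_assoc, hx.mul_mul_self]
  calc x = x * (a * x) := by rw [← mul_assoc, hx.2.1]
    _ = y * a * y := by rw [hxy, ← mul_assoc, ← hx.2.2, hxy, hy.2.2]
    _ = y := hy.2.1

theorem isUnit_iff [IsDedekindFiniteMonoid R] (h : IsGroupInverse a x) :
    IsUnit a ↔ a * x = 1 := by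
  refine ⟨fun ha => ha.mul_left_cancel ?_, fun h' => .of_mul_eq_one x h'⟩
  rw [← mul_assoc, h.1, mul_one]

end IsGroupInverse

section Drazin

variable {ι F : Type*} [Fintype ι] [DecidableEq ι] [Field F] {M X Y : Matrix ι ι F}

theorem drazinIndex_le_one_of_isGroupInverse (h : IsGroupInverse M X) : drazinIndex M ≤ 1 := by
  refine Nat.sInf_le (le_antisymm ?_ ?_)
  · calc (M ^ 1).rank = (M * M * X).rank := by rw [pow_one, h.1]
      _ ≤ (M ^ (1 + 1)).rank := by rw [← sq]; exact rank_mul_le_left _ _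
  · rw [pow_succ, pow_one]
    exact rank_mul_le_left _ _

theorem IsDrazinInverse.isGroupInverse (h : IsDrazinInverse M Y) (hM : drazinIndex M ≤ 1) :
    IsGroupInverse M Y := by
  obtain ⟨h₁, h₂, h₃⟩ := h
  refine ⟨?_, h₂, h₃⟩
  interval_cases hk : drazinIndex M
  · rw [pow_one, pow_zero] at h₁
    rw [mul_assoc, h₁, mul_one]
  · rwa [pow_succ, pow_one] at h₁

theorem IsDrazinInverse.eq_of_isGroupInverse (hY : IsDrazinInverse M Y)
    (hX : IsGroupInverse M X) : Y = X :=
  (hY.isGroupInverse (drazinIndex_le_one_of_isGroupInverse hX)).unique hX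

end Drazin

section AntiTriangular

variable {l o R : Type*} [Fintype l] [Fintype o] [DecidableEq l] [DecidableEq o] [Ring R]
  {A : Matrix l l R} {B : Matrix l o R} {C : Matrix o l R} {K : Matrix l l R}

theorem fromBlocks_mul_fromBlocks_antiTriangular (hK : B * C * K = 1) :
    fromBlocks A B C 0 * fromBlocks 0 (K * B) (C * K) (-(C * K * A * K * B)) =
      fromBlocks 1 0 0 (C * K * B) := by
  simp [fromBlocks_multiply, ← Matrix.mul_assoc, hK]

theorem fromBlocks_antiTriangular_mul_fromBlocks (hK : K * (B * C) = 1) :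
    fromBlocks 0 (K * B) (C * K) (-(C * K * A * K * B)) * fromBlocks A B C 0 =
      fromBlocks 1 0 0 (C * K * B) := by
  simp [fromBlocks_multiply, Matrix.mul_assoc, hK]

theorem isGroupInverse_fromBlocks_antiTriangular (hK₁ : B * C * K = 1) (hK₂ : K * (B * C) = 1) :
    IsGroupInverse (fromBlocks A B C 0)
      (fromBlocks 0 (K * B) (C * K) (-(C * K * A * K * B))) := by
  have hMX := fromBlocks_mul_fromBlocks_antiTriangular (A := A) hK₁
  refine ⟨?_, ?_, hMX.trans (fromBlocks_antiTriangular_mul_fromBlocks hK₂).symm⟩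
  · rw [mul_assoc, hMX]
    simp [fromBlocks_multiply, ← Matrix.mul_assoc, hK₁]
  · have hB : B * (C * (K * B)) = B := by
      rw [← Matrix.mul_assoc, ← Matrix.mul_assoc, hK₁, Matrix.one_mul]
    rw [mul_assoc, hMX]
    simp [fromBlocks_multiply, Matrix.mul_assoc, hB]

theorem isUnit_fromBlocks_zero₂₂_iff [IsStablyFiniteRing R] (hK₁ : B * C * K = 1)
    (hK₂ : K * (B * C) = 1) : IsUnit (fromBlocks A B C 0) ↔ C * K * B = 1 := by
  rw [(isGroupInverse_fromBlocks_antiTriangular hK₁ hK₂).isUnit_iff,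
    fromBlocks_mul_fromBlocks_antiTriangular hK₁, ← fromBlocks_one, fromBlocks_inj]
  simp

theorem mul_mul_eq_one_iff_exists_inverses (hK₁ : B * C * K = 1) (hK₂ : K * (B * C) = 1) :
    C * K * B = 1 ↔
      (∃ B' : Matrix o l R, B * B' = 1 ∧ B' * B = 1) ∧
        (∃ C' : Matrix l o R, C * C' = 1 ∧ C' * C = 1) := by
  refine ⟨fun h => ⟨⟨C * K, by rw [← Matrix.mul_assoc, hK₁], h⟩,
    ⟨K * B, by rw [← Matrix.mul_assoc, h], by rw [Matrix.mul_assoc, hK₂]⟩⟩, ?_⟩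
  rintro ⟨⟨B', -, hB'B⟩, -⟩
  have hCK : C * K = B' :=
    calc C * K = B' * (B * C * K) := by
          rw [← Matrix.mul_assoc, ← Matrix.mul_assoc, hB'B, Matrix.one_mul]
      _ = B' := by rw [hK₁, Matrix.mul_one]
  rw [hCK, hB'B]

end AntiTriangular

/-- with `BC` invertible and `M = [[A,B],[C,0]]`:
(1) `M` is invertible iff both `B` and `C` are invertible;
(2) `i(M) ≤ 1` and
`M^D = [[0, (BC)⁻¹ B],[C (BC)⁻¹, −C (BC)⁻¹ A (BC)⁻¹ B]]`. -/
theorem anti_triangular_BC_invertible {F : Type*} [Field F] {n m : ℕ}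
    (A : Matrix (Fin n) (Fin n) F) (B : Matrix (Fin n) (Fin m) F)
    (C : Matrix (Fin m) (Fin n) F)
    (hBC : IsUnit (B * C))
    (MD : Matrix (Fin n ⊕ Fin m) (Fin n ⊕ Fin m) F)
    (hMD : IsDrazinInverse (Matrix.fromBlocks A B C 0) MD) :
    (IsUnit (Matrix.fromBlocks A B C 0) ↔
      ((∃ B' : Matrix (Fin m) (Fin n) F, B * B' = 1 ∧ B' * B = 1) ∧
       (∃ C' : Matrix (Fin n) (Fin m) F, C * C' = 1 ∧ C' * C = 1))) ∧
    drazinIndex (Matrix.fromBlocks A B C 0) ≤ 1 ∧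
    MD = Matrix.fromBlocks 0 ((B * C)⁻¹ * B) (C * (B * C)⁻¹)
          (-(C * (B * C)⁻¹ * A * (B * C)⁻¹ * B)) := by
  have hdet : IsUnit (B * C).det := (isUnit_iff_isUnit_det _).mp hBC
  have hK₁ : B * C * (B * C)⁻¹ = 1 := mul_nonsing_inv _ hdet
  have hK₂ : (B * C)⁻¹ * (B * C) = 1 := nonsing_inv_mul _ hdet
  have hX := isGroupInverse_fromBlocks_antiTriangular (A := A) hK₁ hK₂
  exact ⟨(isUnit_fromBlocks_zero₂₂_iff hK₁ hK₂).trans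
      (mul_mul_eq_one_iff_exists_inverses hK₁ hK₂),
    drazinIndex_le_one_of_isGroupInverse hX, hMD.eq_of_isGroupInverse hX⟩
end
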